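/- arXiv:2012.12100 — 3 statements merged into one kernel-verified Lean document; each statement's English description precedes it below -/
import Mathlib

section
/- For x ∈ Ω^m \ {0^m} written as x = 0^k κ x' with κ ∈ {-1,1}, all y ∈ {-1,1}^m with x ⪯ y and alt(y) = alt(x) agree on their first k+1 coordinates, which alternate in sign ending with κ at position k+1. In particular the function sign(x), defined as the first letter of any such y, is well defined, and sign(-x) = -sign(x). -/
/-- The partial order on `Ω = {-1,0,1}` (modeled by `SignType`) with `0` below
both `1` and `-1`, lifted componentwise to `Ω^m`. -/
def sLe {m : ℕ} (x y : Fin m → SignType) : Prop := ∀ i, x i = 0 ∨ x i = y i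

open Classical in
/-- Number of sign alternations of `y ∈ {-1,1}^m`. -/
noncomputable def altB {m : ℕ} (y : Fin m → SignType) : ℕ :=
  (Finset.univ.filter (fun i : Fin m => ∃ h : (i : ℕ) + 1 < m, y i ≠ y ⟨(i : ℕ) + 1, h⟩)).card

open Classical in
/-- Extension of `altB` to `Ω^m \ {0^m}`. -/
noncomputable def altO {m : ℕ} (x : Fin m → SignType) : ℕ :=
  (Finset.univ.filter (fun y : Fin m → SignType => (∀ i, y i ≠ 0) ∧ sLe x y)).sup altB

lemma sign_neg_of_ne : ∀ a b : SignType, a ≠ 0 → b ≠ 0 → a ≠ b → a = -b := by decide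

lemma sign_neg_ne_zero : ∀ a : SignType, a ≠ 0 → -a ≠ 0 := by decide

lemma sign_ne_neg_self : ∀ a : SignType, a ≠ 0 → a ≠ -a := by decide

lemma prefix_pattern {m k : ℕ} (hk : k < m) (κ : SignType)
    (y : Fin m → SignType) (hy0 : ∀ i, y i ≠ 0)
    (hyk : y ⟨k, hk⟩ = κ)
    (halt : ∀ j : ℕ, (hj : j < k) → y ⟨j, by omega⟩ ≠ y ⟨j+1, by omega⟩) :
    ∀ i : Fin m, (i : ℕ) ≤ k → y i = (if Even (k - (i : ℕ)) then κ else -κ) := by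
  suffices H : ∀ d : ℕ, ∀ j : ℕ, (hj : j < m) → j + d = k →
      y ⟨j, hj⟩ = (if Even d then κ else -κ) by
    intro i hi
    have := H (k - (i : ℕ)) (i : ℕ) i.isLt (by omega)
    simpa using this
  intro d
  induction d with
  | zero =>
    intro j hj hjk
    have : j = k := by omega
    subst this
    simpa using hyk
  | succ d ih =>
    intro j hj hjk
    have hj1 : j + 1 < m := by omega
    have h1 := ih (j+1) hj1 (by omega)
    have hne := halt j (by omega)
    have h2 := sign_neg_of_ne _ _ (hy0 _) (hy0 _) hne
    rw [h2, h1]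
    by_cases hd : Even d <;> simp [hd, Nat.even_add_one]

open Classical in
lemma maximizer_prefix {m k : ℕ} (x : Fin m → SignType) (κ : SignType) (hκ : κ ≠ 0)
    (hk : k < m) (hzero : ∀ i : Fin m, (i : ℕ) < k → x i = 0)
    (hxk : x ⟨k, hk⟩ = κ) :
    ∀ y : Fin m → SignType, (∀ i, y i ≠ 0) → sLe x y → altB y = altO x →
      ∀ i : Fin m, (i : ℕ) ≤ k → y i = (if Even (k - (i : ℕ)) then κ else -κ) := by
  intro y hy0 hxy hmax
  have hyk : y ⟨k, hk⟩ = κ := by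
    rcases hxy ⟨k, hk⟩ with h | h
    · exact absurd (h ▸ hxk).symm hκ
    · rw [← h, hxk]
  -- it suffices that y alternates on the prefix
  have key : ∀ j : ℕ, (hj : j < k) → y ⟨j, by omega⟩ ≠ y ⟨j+1, by omega⟩ := by
    by_contra hbad
    push_neg at hbad
    obtain ⟨j, hj, hjeq⟩ := hbad
    -- the patched function
    set p : Fin m → SignType :=
      fun i => if (i : ℕ) ≤ k then (if Even (k - (i : ℕ)) then κ else -κ) else y i with hp
    have hpk : p ⟨k, hk⟩ = κ := by simp [hp]
    have hagree : ∀ i : Fin m, k ≤ (i : ℕ) → p i = y i := by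
      intro i hi
      rcases eq_or_lt_of_le hi with h | h
      · have : i = ⟨k, hk⟩ := Fin.ext (by simp [← h])
        rw [this, hpk, hyk]
      · simp [hp, Nat.not_le.mpr h]
    have hp0 : ∀ i, p i ≠ 0 := by
      intro i
      by_cases hi : (i : ℕ) ≤ k
      · simp only [hp, hi, if_true]
        by_cases he : Even (k - (i : ℕ)) <;> simp [he, hκ, sign_neg_ne_zero κ hκ]
      · simpa [hp, hi] using hy0 i
    have hxp : sLe x p := by
      intro i
      rcases lt_trichotomy (i : ℕ) k with h | h | h
      · exact Or.inl (hzero i h)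
      · right
        have : i = ⟨k, hk⟩ := Fin.ext (by simp [← h])
        rw [this, hpk, hxk]
      · rcases hxy i with h' | h'
        · exact Or.inl h'
        · exact Or.inr (by rw [hagree i h.le]; exact h')
    -- counting
    have split : ∀ w : Fin m → SignType, altB w =
        ((Finset.univ.filter (fun i : Fin m => ∃ h : (i : ℕ) + 1 < m, w i ≠ w ⟨(i : ℕ) + 1, h⟩)).filter
          (fun i : Fin m => (i : ℕ) < k)).card +
        ((Finset.univ.filter (fun i : Fin m => ∃ h : (i : ℕ) + 1 < m, w i ≠ w ⟨(i : ℕ) + 1, h⟩)).filter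
          (fun i : Fin m => ¬ (i : ℕ) < k)).card := by
      intro w
      rw [altB, eq_comm]
      exact Finset.card_filter_add_card_filter_not _
    -- high parts agree
    have hhigh :
        ((Finset.univ.filter (fun i : Fin m => ∃ h : (i : ℕ) + 1 < m, p i ≠ p ⟨(i : ℕ) + 1, h⟩)).filter
          (fun i : Fin m => ¬ (i : ℕ) < k)) =
        ((Finset.univ.filter (fun i : Fin m => ∃ h : (i : ℕ) + 1 < m, y i ≠ y ⟨(i : ℕ) + 1, h⟩)).filter
          (fun i : Fin m => ¬ (i : ℕ) < k)) := by
      ext i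
      simp only [Finset.mem_filter, Finset.mem_univ, true_and, Nat.not_lt]
      constructor
      · rintro ⟨⟨h, hne⟩, hki⟩
        exact ⟨⟨h, by rwa [hagree i hki, hagree ⟨(i:ℕ)+1, h⟩ (by simp; omega)] at hne⟩, hki⟩
      · rintro ⟨⟨h, hne⟩, hki⟩
        exact ⟨⟨h, by rwa [hagree i hki, hagree ⟨(i:ℕ)+1, h⟩ (by simp; omega)]⟩, hki⟩
    -- low part of p is everything below k
    have hlowp :
        ((Finset.univ.filter (fun i : Fin m => ∃ h : (i : ℕ) + 1 < m, p i ≠ p ⟨(i : ℕ) + 1, h⟩)).filter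
          (fun i : Fin m => (i : ℕ) < k)) = Finset.Iio (⟨k, hk⟩ : Fin m) := by
      ext i
      simp only [Finset.mem_filter, Finset.mem_univ, true_and, Finset.mem_Iio, Fin.lt_def]
      constructor
      · rintro ⟨_, hik⟩; exact hik
      · intro hik
        refine ⟨⟨by omega, ?_⟩, hik⟩
        have h1 : ((i : ℕ)) ≤ k := hik.le
        have h2 : ((i : ℕ)) + 1 ≤ k := hik
        have hd : k - (i : ℕ) = (k - ((i : ℕ) + 1)) + 1 := by omega
        simp only [hp, h1, h2, if_true, hd, Nat.even_add_one]
        by_cases he : Even (k - ((i : ℕ) + 1)) <;>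
          simp [he, sign_ne_neg_self κ hκ, (sign_ne_neg_self κ hκ).symm, Ne.symm]
    -- low part of y is strictly smaller
    have hjm : j < m := by omega
    have hlowy :
        ((Finset.univ.filter (fun i : Fin m => ∃ h : (i : ℕ) + 1 < m, y i ≠ y ⟨(i : ℕ) + 1, h⟩)).filter
          (fun i : Fin m => (i : ℕ) < k)).card < k := by
      have hsub : ((Finset.univ.filter (fun i : Fin m => ∃ h : (i : ℕ) + 1 < m, y i ≠ y ⟨(i : ℕ) + 1, h⟩)).filter
          (fun i : Fin m => (i : ℕ) < k)) ⊂ Finset.Iio (⟨k, hk⟩ : Fin m) := by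
        constructor
        · intro i hi
          simp only [Finset.mem_filter] at hi
          simpa [Finset.mem_Iio, Fin.lt_def] using hi.2
        · intro hsup
          have hmem : (⟨j, hjm⟩ : Fin m) ∈ Finset.Iio (⟨k, hk⟩ : Fin m) := by
            simp [Finset.mem_Iio, Fin.lt_def, hj]
          have := hsup hmem
          simp only [Finset.mem_filter, Finset.mem_univ, true_and] at this
          obtain ⟨⟨h, hne⟩, _⟩ := this
          exact hne hjeq
      have := Finset.card_lt_card hsub
      rwa [Fin.card_Iio] at this
    -- p is in the competing set
    have hple : altB p ≤ altO x := by
      apply Finset.le_sup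
      simp only [Finset.mem_filter, Finset.mem_univ, true_and]
      exact ⟨hp0, hxp⟩
    have hcard : altB y < altB p := by
      rw [split y, split p, hhigh, hlowp, Fin.card_Iio]
      exact Nat.add_lt_add_right hlowy _
    omega
  exact prefix_pattern hk κ y hy0 hyk key

/-- write `x = 0^k κ x'` with `κ ∈ {-1,1}`. Every maximizer
`y ∈ {-1,1}^m` of `alt` above `x` agrees on its first `k+1` coordinates,
which alternate in sign ending with `κ` at position `k+1`. In particular
`sign(x)`, the first letter of any maximizer, is well defined and
`sign(-x) = -sign(x)`. -/
theorem stmt10 (m k : ℕ) (x : Fin m → SignType) (κ : SignType) (hκ : κ ≠ 0)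
    (hk : k < m) (hzero : ∀ i : Fin m, (i : ℕ) < k → x i = 0)
    (hxk : x ⟨k, hk⟩ = κ) :
    (∀ y : Fin m → SignType, (∀ i, y i ≠ 0) → sLe x y → altB y = altO x →
      ∀ i : Fin m, (i : ℕ) ≤ k → y i = (if Even (k - (i : ℕ)) then κ else -κ)) ∧
    (∀ y z : Fin m → SignType,
      (∀ i, y i ≠ 0) → sLe x y → altB y = altO x →
      (∀ i, z i ≠ 0) → sLe (-x) z → altB z = altO (-x) →
      z ⟨0, by omega⟩ = -(y ⟨0, by omega⟩)) := by
  have main := maximizer_prefix x κ hκ hk hzero hxk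
  have hzero' : ∀ i : Fin m, (i : ℕ) < k → (-x) i = 0 := by
    intro i hi; simp [hzero i hi]
  have hxk' : (-x) ⟨k, hk⟩ = -κ := by simp [hxk]
  have main' := maximizer_prefix (-x) (-κ) (sign_neg_ne_zero κ hκ) hk hzero' hxk'
  refine ⟨main, ?_⟩
  intro y z hy0 hxy hymax hz0 hxz hzmax
  have hy := main y hy0 hxy hymax ⟨0, by omega⟩ (by simp)
  have hz := main' z hz0 hxz hzmax ⟨0, by omega⟩ (by simp)
  rw [hy, hz]
  by_cases he : Even k <;> simp [he]
end

section
/- Octahedral Tucker lemma: let λ : Ω^m \ {0^m} → {±1, ..., ±q} satisfy λ(-x) = -λ(x) for all x, and λ(x) + λ(y) ≠ 0 whenever x ⪯ y. Then q ≥ m. -/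
namespace Oct

open scoped Classical

variable {m : ℕ}

def supp (x : Fin m → SignType) : Finset (Fin m) := Finset.univ.filter (fun i => x i ≠ 0)

def ht (x : Fin m → SignType) : ℕ := (supp x).card

def IsCh (σ : Finset (Fin m → SignType)) : Prop := ∀ x ∈ σ, ∀ y ∈ σ, sLe x y ∨ sLe y x

def inS (j : ℕ) (x : Fin m → SignType) : Prop := x ≠ 0 ∧ ∀ i : Fin m, j ≤ (i : ℕ) → x i = 0

def inD (j : ℕ) (x : Fin m → SignType) : Prop :=
  inS j x ∧ ∀ i : Fin m, (i : ℕ) + 1 = j → x i ≠ -1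

lemma sLe_refl (x : Fin m → SignType) : sLe x x := fun i => Or.inr rfl

lemma sLe_trans {x y z : Fin m → SignType} (h1 : sLe x y) (h2 : sLe y z) : sLe x z := by
  intro i
  rcases h1 i with h | h
  · exact Or.inl h
  · rcases h2 i with h' | h'
    · exact Or.inl (h.trans h')
    · exact Or.inr (h.trans h')

lemma mem_supp {x : Fin m → SignType} {i : Fin m} : i ∈ supp x ↔ x i ≠ 0 := by
  simp [supp]

lemma apply_eq_of_sLe {x y : Fin m → SignType} (h : sLe x y) {i : Fin m} (hi : x i ≠ 0) :
    y i = x i := by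
  rcases h i with h' | h'
  · exact absurd h' hi
  · exact h'.symm

lemma supp_subset_of_sLe {x y : Fin m → SignType} (h : sLe x y) : supp x ⊆ supp y := by
  intro i hi
  rw [mem_supp] at hi ⊢
  rw [apply_eq_of_sLe h hi]
  exact hi

lemma eq_of_sLe_supp_subset {x y : Fin m → SignType} (h : sLe x y) (hs : supp y ⊆ supp x) :
    x = y := by
  funext i
  by_cases hi : x i = 0
  · have : i ∉ supp y := fun hmem => (mem_supp.mp (hs hmem)) hi
    rw [mem_supp, not_not] at this
    rw [hi, this]
  · exact (apply_eq_of_sLe h hi).symm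

lemma sLe_antisymm {x y : Fin m → SignType} (h1 : sLe x y) (h2 : sLe y x) : x = y :=
  eq_of_sLe_supp_subset h1 (supp_subset_of_sLe h2)

lemma ne_zero_iff_supp_nonempty {x : Fin m → SignType} : x ≠ 0 ↔ (supp x).Nonempty := by
  constructor
  · intro hx
    by_contra h
    rw [Finset.not_nonempty_iff_eq_empty] at h
    apply hx
    funext i
    have : i ∉ supp x := h ▸ Finset.notMem_empty i
    rw [mem_supp, not_not] at this
    exact this
  · rintro ⟨i, hi⟩ h
    rw [mem_supp] at hi
    exact hi (by rw [h]; rfl)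

lemma chain_sLe_of_ht_le {σ : Finset (Fin m → SignType)} (hch : IsCh σ)
    {x y : Fin m → SignType} (hx : x ∈ σ) (hy : y ∈ σ) (h : ht x ≤ ht y) : sLe x y := by
  rcases hch x hx y hy with h' | h'
  · exact h'
  · have hs : supp y ⊆ supp x := supp_subset_of_sLe h'
    have : supp x = supp y :=
      (Finset.eq_of_subset_of_card_le hs h).symm
    have hxy : y = x := eq_of_sLe_supp_subset h' (this ▸ Finset.Subset.refl _)
    rw [hxy]
    exact sLe_refl x

lemma chain_eq_of_ht_eq {σ : Finset (Fin m → SignType)} (hch : IsCh σ)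
    {x y : Fin m → SignType} (hx : x ∈ σ) (hy : y ∈ σ) (h : ht x = ht y) : x = y :=
  sLe_antisymm (chain_sLe_of_ht_le hch hx hy h.le) (chain_sLe_of_ht_le hch hy hx h.ge)

lemma isCh_subset {σ τ : Finset (Fin m → SignType)} (h : τ ⊆ σ) (hch : IsCh σ) : IsCh τ :=
  fun x hx y hy => hch x (h hx) y (h hy)

lemma isCh_insert {σ : Finset (Fin m → SignType)} {z : Fin m → SignType} (hch : IsCh σ)
    (hz : ∀ x ∈ σ, sLe x z ∨ sLe z x) : IsCh (insert z σ) := by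
  intro x hx y hy
  rcases Finset.mem_insert.mp hx with rfl | hx'
  · rcases Finset.mem_insert.mp hy with rfl | hy'
    · exact Or.inl (sLe_refl _)
    · rcases hz y hy' with h | h
      · exact Or.inr h
      · exact Or.inl h
  · rcases Finset.mem_insert.mp hy with rfl | hy'
    · exact hz x hx'
    · exact hch x hx' y hy'

def Jset (m j : ℕ) : Finset (Fin m) := Finset.univ.filter (fun i : Fin m => (i : ℕ) < j)

lemma mem_Jset {j : ℕ} {i : Fin m} : i ∈ Jset m j ↔ (i : ℕ) < j := by simp [Jset]

lemma card_Jset {j : ℕ} (hjm : j ≤ m) : (Jset m j).card = j := by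
  have h : Jset m j = Finset.attachFin (Finset.range j)
      (fun a ha => lt_of_lt_of_le (Finset.mem_range.mp ha) hjm) := by
    ext i
    rw [mem_Jset, Finset.mem_attachFin, Finset.mem_range]
  rw [h, Finset.card_attachFin, Finset.card_range]

lemma supp_subset_Jset {j : ℕ} {x : Fin m → SignType} (h : inS j x) : supp x ⊆ Jset m j := by
  intro i hi
  rw [mem_supp] at hi
  rw [mem_Jset]
  by_contra hc
  exact hi (h.2 i (not_lt.mp hc))

lemma ht_pos {j : ℕ} {x : Fin m → SignType} (h : inS j x) : 1 ≤ ht x := by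
  rw [ht, Nat.one_le_iff_ne_zero, ← Nat.pos_iff_ne_zero, Finset.card_pos]
  exact ne_zero_iff_supp_nonempty.mp h.1

lemma ht_le {j : ℕ} (hjm : j ≤ m) {x : Fin m → SignType} (h : inS j x) : ht x ≤ j := by
  rw [ht, ← card_Jset hjm]
  exact Finset.card_le_card (supp_subset_Jset h)

lemma supp_eq_Jset_of_ht {j : ℕ} (hjm : j ≤ m) {x : Fin m → SignType} (h : inS j x)
    (hht : ht x = j) : supp x = Jset m j := by
  apply Finset.eq_of_subset_of_card_le (supp_subset_Jset h)
  rw [card_Jset hjm, ← hht, ht]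

lemma sLe_downward {j : ℕ} {x y : Fin m → SignType} (h : sLe x y) (hx : x ≠ 0) (hy : inD j y) :
    inD j x := by
  refine ⟨⟨hx, fun i hi => ?_⟩, fun i hi => ?_⟩
  · rcases h i with h' | h'
    · exact h'
    · rw [h']; exact hy.1.2 i hi
  · rcases h i with h' | h'
    · rw [h']; decide
    · rw [h']; exact hy.2 i hi

def res (y : Fin m → SignType) (A : Finset (Fin m)) : Fin m → SignType :=
  fun i => if i ∈ A then y i else 0

lemma sLe_res (y : Fin m → SignType) (A : Finset (Fin m)) : sLe (res y A) y := by
  intro i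
  by_cases h : i ∈ A
  · exact Or.inr (by simp [res, h])
  · exact Or.inl (by simp [res, h])

lemma res_mono {y : Fin m → SignType} {A B : Finset (Fin m)} (h : A ⊆ B) :
    sLe (res y A) (res y B) := by
  intro i
  by_cases hi : i ∈ A
  · exact Or.inr (by simp [res, hi, h hi])
  · exact Or.inl (by simp [res, hi])

lemma supp_res {y : Fin m → SignType} {A : Finset (Fin m)} (h : A ⊆ supp y) :
    supp (res y A) = A := by
  ext i
  simp only [mem_supp, res]
  by_cases hi : i ∈ A
  · simp [hi, mem_supp.mp (h hi)]
  · simp [hi]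

lemma eq_res_of_sLe {x y : Fin m → SignType} (h : sLe x y) : x = res y (supp x) := by
  funext i
  by_cases hi : x i ≠ 0
  · simp only [res, if_pos (mem_supp.mpr hi)]
    exact (apply_eq_of_sLe h hi).symm
  · rw [not_not] at hi
    simp only [res, if_neg (fun hmem => (mem_supp.mp hmem) hi)]
    exact hi

lemma facet_image {j : ℕ} (hjm : j ≤ m) {σ : Finset (Fin m → SignType)} (hch : IsCh σ)
    (hin : ∀ x ∈ σ, inS j x) (hcard : σ.card = j) : σ.image ht = Finset.Icc 1 j := by
  have hsub : σ.image ht ⊆ Finset.Icc 1 j := by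
    intro s hs
    obtain ⟨x, hx, rfl⟩ := Finset.mem_image.mp hs
    exact Finset.mem_Icc.mpr ⟨ht_pos (hin x hx), ht_le hjm (hin x hx)⟩
  have hcardim : (σ.image ht).card = j := by
    rw [Finset.card_image_of_injOn (fun x hx y hy h => chain_eq_of_ht_eq hch hx hy h), hcard]
  apply (Finset.eq_of_subset_of_card_le hsub ?_)
  rw [hcardim, Nat.card_Icc]
  omega

lemma ridge_image {j : ℕ} (hj : 1 ≤ j) (hjm : j ≤ m) {σ : Finset (Fin m → SignType)}
    (hch : IsCh σ) (hin : ∀ x ∈ σ, inS j x) (hcard : σ.card = j - 1) :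
    ∃ t, 1 ≤ t ∧ t ≤ j ∧ σ.image ht = (Finset.Icc 1 j).erase t := by
  have hsub : σ.image ht ⊆ Finset.Icc 1 j := by
    intro s hs
    obtain ⟨x, hx, rfl⟩ := Finset.mem_image.mp hs
    exact Finset.mem_Icc.mpr ⟨ht_pos (hin x hx), ht_le hjm (hin x hx)⟩
  have hcardim : (σ.image ht).card = j - 1 := by
    rw [Finset.card_image_of_injOn (fun x hx y hy h => chain_eq_of_ht_eq hch hx hy h), hcard]
  have hIcc : (Finset.Icc 1 j).card = j := by rw [Nat.card_Icc]; omega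
  have hsd : ((Finset.Icc 1 j) \ σ.image ht).card = 1 := by
    rw [Finset.card_sdiff_of_subset hsub, hIcc, hcardim]
    omega
  obtain ⟨t, ht'⟩ := Finset.card_eq_one.mp hsd
  have htmem : t ∈ Finset.Icc 1 j := by
    have : t ∈ (Finset.Icc 1 j) \ σ.image ht := ht' ▸ Finset.mem_singleton_self t
    exact (Finset.mem_sdiff.mp this).1
  have htni : t ∉ σ.image ht := by
    have : t ∈ (Finset.Icc 1 j) \ σ.image ht := ht' ▸ Finset.mem_singleton_self t
    exact (Finset.mem_sdiff.mp this).2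
  refine ⟨t, (Finset.mem_Icc.mp htmem).1, (Finset.mem_Icc.mp htmem).2, ?_⟩
  apply Finset.eq_of_subset_of_card_le
  · intro s hs
    refine Finset.mem_erase.mpr ⟨fun h => htni (h ▸ hs), hsub hs⟩
  · rw [Finset.card_erase_of_mem htmem, hIcc, hcardim]


lemma missing_one {α : Type*} [DecidableEq α] {s T : Finset α} (hsub : s ⊆ T)
    (hc : T.card = s.card + 1) :
    ∃ a, a ∈ T ∧ a ∉ s ∧ s = T.erase a := by
  have hsd : (T \ s).card = 1 := by
    rw [Finset.card_sdiff_of_subset hsub]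
    omega
  obtain ⟨a, ha⟩ := Finset.card_eq_one.mp hsd
  have hmem : a ∈ T \ s := ha ▸ Finset.mem_singleton_self a
  refine ⟨a, (Finset.mem_sdiff.mp hmem).1, (Finset.mem_sdiff.mp hmem).2, ?_⟩
  apply Finset.eq_of_subset_of_card_le
  · intro b hb
    exact Finset.mem_erase.mpr
      ⟨fun h => (Finset.mem_sdiff.mp hmem).2 (h ▸ hb), hsub hb⟩
  · rw [Finset.card_erase_of_mem (Finset.mem_sdiff.mp hmem).1]
    omega

theorem ext_count {j : ℕ} (hj : 1 ≤ j) (hjm : j ≤ m) (c : Fin m) (hc : (c : ℕ) + 1 = j)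
    {κ : Finset (Fin m → SignType)} (hch : IsCh κ) (hD : ∀ x ∈ κ, inD j x)
    (hcard : κ.card = j - 1) :
    (Finset.univ.filter (fun z : Fin m → SignType =>
        z ∉ κ ∧ inD j z ∧ IsCh (insert z κ))).card
      = if (∀ x ∈ κ, x c = 0) then 1 else 2 := by
  have hcoord : ∀ i : Fin m, (i : ℕ) + 1 = j ↔ i = c := by
    intro i
    constructor
    · intro h; exact Fin.ext (by omega)
    · rintro rfl; exact hc
  have hcJ : c ∈ Jset m j := mem_Jset.mpr (by omega)
  -- the missing height t
  obtain ⟨t, ht1, htj, himg⟩ := ridge_image hj hjm hch (fun x hx => (hD x hx).1) hcard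
  have hhtne : ∀ x ∈ κ, ht x ≠ t := by
    intro x hx h
    have : ht x ∈ κ.image ht := Finset.mem_image_of_mem ht hx
    rw [himg, Finset.mem_erase] at this
    exact this.1 h
  have hhtIcc : ∀ x ∈ κ, 1 ≤ ht x ∧ ht x ≤ j := by
    intro x hx
    exact ⟨ht_pos (hD x hx).1, ht_le hjm (hD x hx).1⟩
  -- basic facts about any member of the extension set
  have hE : ∀ z : Fin m → SignType, z ∉ κ → inD j z → IsCh (insert z κ) → ht z = t := by
    intro z hz hzD hich
    have hins : ∀ x ∈ insert z κ, inS j x := by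
      intro x hx
      rcases Finset.mem_insert.mp hx with rfl | hx'
      · exact hzD.1
      · exact (hD x hx').1
    have hfc : (insert z κ).card = j := by
      rw [Finset.card_insert_of_notMem hz, hcard]
      omega
    have himg2 : (insert z κ).image ht = Finset.Icc 1 j := facet_image hjm hich hins hfc
    have htmem : t ∈ (insert z κ).image ht := by
      rw [himg2]
      exact Finset.mem_Icc.mpr ⟨ht1, htj⟩
    rw [Finset.image_insert] at htmem
    rcases Finset.mem_insert.mp htmem with h | h
    · exact h.symm
    · obtain ⟨x, hx, hxe⟩ := Finset.mem_image.mp h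
      exact absurd hxe (hhtne x hx)
  have hget : ∀ s, 1 ≤ s → s ≤ j → s ≠ t → ∃ x ∈ κ, ht x = s := by
    intro s h1 h2 hne
    have : s ∈ κ.image ht := by
      rw [himg, Finset.mem_erase]
      exact ⟨hne, Finset.mem_Icc.mpr ⟨h1, h2⟩⟩
    obtain ⟨x, hx, hxe⟩ := Finset.mem_image.mp this
    exact ⟨x, hx, hxe⟩
  rcases Finset.eq_empty_or_nonempty κ with rfl | hne
  · -- empty ridge: j = 1
    have hj1 : j = 1 := by
      simp only [Finset.card_empty] at hcard
      omega
    have hcv : (c : ℕ) = 0 := by omega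
    set e : Fin m → SignType := fun i => if i = c then 1 else 0 with he
    have hefilter : (Finset.univ.filter (fun z : Fin m → SignType =>
        z ∉ (∅ : Finset (Fin m → SignType)) ∧ inD j z ∧ IsCh (insert z ∅))).card = 1 := by
      rw [Finset.card_eq_one]
      refine ⟨e, ?_⟩
      ext z
      simp only [Finset.mem_filter, Finset.mem_univ, true_and, Finset.notMem_empty,
        not_false_iff, Finset.mem_singleton]
      constructor
      · rintro ⟨hzD, -⟩
        have hzc : z c ≠ 0 := by
          intro h0
          apply hzD.1.1
          funext i
          by_cases hi : i = c
          · rw [hi, h0]; rfl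
          · have : j ≤ (i : ℕ) := by
              rcases Nat.eq_zero_or_pos (i : ℕ) with h | h
              · exact absurd (Fin.ext (by omega)) hi
              · omega
            rw [hzD.1.2 i this]; rfl
        have hzc2 : z c ≠ -1 := hzD.2 c hc
        funext i
        by_cases hi : i = c
        · subst hi
          rw [he]
          simp only [if_pos rfl]
          cases h : z i
          · exact absurd h hzc
          · exact absurd h hzc2
          · rfl
        · have : j ≤ (i : ℕ) := by
            rcases Nat.eq_zero_or_pos (i : ℕ) with h | h
            · exact absurd (Fin.ext (by omega)) hi
            · omega
          rw [hzD.1.2 i this, he]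
          simp [hi]
      · rintro rfl
        refine ⟨⟨⟨?_, ?_⟩, ?_⟩, ?_⟩
        · intro h
          have := congrFun h c
          simp [he] at this
        · intro i hi
          have : i ≠ c := by
            intro h
            rw [h, hcv] at hi
            omega
          simp [he, this]
        · intro i hi
          have : i = c := (hcoord i).mp hi
          subst this
          simp [he]
        · intro x hx y hy
          rcases Finset.mem_insert.mp hx with rfl | hx'
          · rcases Finset.mem_insert.mp hy with rfl | hy'
            · exact Or.inl (sLe_refl _)
            · exact absurd hy' (Finset.notMem_empty _)
          · exact absurd hx' (Finset.notMem_empty _)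
    rw [hefilter, if_pos (fun x hx => absurd hx (Finset.notMem_empty x))]
  · -- κ nonempty, so j ≥ 2
    have hj2 : 2 ≤ j := by
      have := Finset.card_pos.mpr hne
      omega
    by_cases htj' : t = j
    · -- missing top height
      subst htj'
      obtain ⟨top, htopmem, htop⟩ := hget (t - 1) (by omega) (by omega) (by omega)
      have hallle : ∀ x ∈ κ, sLe x top := by
        intro x hx
        refine chain_sLe_of_ht_le hch hx htopmem ?_
        have h1 := hhtIcc x hx
        have h2 := hhtne x hx
        omega
      obtain ⟨c0, hc0J, hc0ns, hsupp_top⟩ : ∃ c0, c0 ∈ Jset m t ∧ c0 ∉ supp top ∧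
          supp top = (Jset m t).erase c0 := by
        obtain ⟨c0, h1, h2, h3⟩ := missing_one (supp_subset_Jset (hD top htopmem).1)
          (by rw [card_Jset hjm, ← ht, htop]; omega)
        exact ⟨c0, h1, h2, h3⟩
      have htopc0 : top c0 = 0 := by
        by_contra h
        exact hc0ns (mem_supp.mpr h)
      set z : SignType → (Fin m → SignType) := fun sg i => if i = c0 then sg else top i with hz
      have F1 : ∀ sg : SignType, sg ≠ 0 → supp (z sg) = Jset m t := by
        intro sg hsg
        ext i
        rw [mem_supp]
        by_cases hic0 : i = c0
        · subst hic0
          simp only [hz, if_pos rfl]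
          exact iff_of_true hsg hc0J
        · simp only [hz, if_neg hic0]
          rw [← mem_supp, hsupp_top, Finset.mem_erase]
          exact ⟨fun h => h.2, fun h => ⟨hic0, h⟩⟩
      have F2 : ∀ sg, sLe top (z sg) := by
        intro sg i
        by_cases hic0 : i = c0
        · subst hic0
          exact Or.inl htopc0
        · exact Or.inr (by simp [hz, hic0])
      have F3 : ∀ sg : SignType, sg ≠ 0 → ht (z sg) = t := by
        intro sg hsg
        rw [ht, F1 sg hsg, card_Jset hjm]
      have F3' : ∀ sg : SignType, sg ≠ 0 → z sg ∉ κ := by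
        intro sg hsg hmem
        exact hhtne (z sg) hmem (F3 sg hsg)
      have F4 : ∀ sg : SignType, sg ≠ 0 → (c0 = c → sg ≠ -1) → inD t (z sg) := by
        intro sg hsg hsg2
        refine ⟨⟨?_, ?_⟩, ?_⟩
        · rw [ne_zero_iff_supp_nonempty, F1 sg hsg]
          exact ⟨c, hcJ⟩
        · intro i hi
          by_contra hne'
          have : i ∈ supp (z sg) := mem_supp.mpr hne'
          rw [F1 sg hsg, mem_Jset] at this
          omega
        · intro i hi
          have hic : i = c := (hcoord i).mp hi
          subst hic
          by_cases hic0 : i = c0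
          · subst hic0
            simp only [hz, if_pos rfl]
            exact hsg2 rfl
          · simp only [hz, if_neg hic0]
            exact (hD top htopmem).2 i hi
      have F5 : ∀ sg, IsCh (insert (z sg) κ) := by
        intro sg
        exact isCh_insert hch (fun x hx => Or.inl (sLe_trans (hallle x hx) (F2 sg)))
      have F6 : ∀ z' : Fin m → SignType, z' ∉ κ → inD t z' → IsCh (insert z' κ) →
          z' = z (z' c0) ∧ z' c0 ≠ 0 ∧ (c0 = c → z' c0 = 1) := by
        intro z' hz'ni hz'D hz'ch
        have hhtz' : ht z' = t := hE z' hz'ni hz'D hz'ch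
        have hsuppz' : supp z' = Jset m t := supp_eq_Jset_of_ht hjm hz'D.1 hhtz'
        have hlez' : sLe top z' := by
          refine chain_sLe_of_ht_le hz'ch (Finset.mem_insert_of_mem htopmem)
            (Finset.mem_insert_self _ _) ?_
          rw [htop, hhtz']
          omega
        have hz'c0 : z' c0 ≠ 0 := by
          rw [← mem_supp, hsuppz']
          exact hc0J
        refine ⟨?_, hz'c0, ?_⟩
        · funext i
          by_cases hic0 : i = c0
          · subst hic0
            simp [hz]
          · simp only [hz, if_neg hic0]
            by_cases hmem : i ∈ supp top
            · exact apply_eq_of_sLe hlez' (mem_supp.mp hmem)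
            · have h1 : top i = 0 := by
                by_contra h
                exact hmem (mem_supp.mpr h)
              have h2 : z' i = 0 := by
                by_contra h
                have : i ∈ supp z' := mem_supp.mpr h
                rw [hsuppz'] at this
                exact hmem (hsupp_top ▸ Finset.mem_erase.mpr ⟨hic0, this⟩)
              rw [h1, h2]
        · intro hc0c
          subst hc0c
          have h1 : z' c0 ≠ -1 := hz'D.2 c0 hc
          cases h : z' c0
          · exact absurd h hz'c0
          · exact absurd h h1
          · rfl
      have hbd_iff : (∀ x ∈ κ, x c = 0) ↔ c = c0 := by
        constructor
        · intro hall
          have htopc : top c = 0 := hall top htopmem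
          have : c ∉ supp top := fun h => (mem_supp.mp h) htopc
          rw [hsupp_top, Finset.mem_erase] at this
          push_neg at this
          by_contra hcc
          exact (this hcc) hcJ
        · rintro rfl
          intro x hx
          rcases hallle x hx c with h | h
          · exact h
          · rw [h, htopc0]
      by_cases hcc0 : c = c0
      · rw [if_pos (hbd_iff.mpr hcc0)]
        rw [Finset.card_eq_one]
        refine ⟨z 1, ?_⟩
        ext z'
        simp only [Finset.mem_filter, Finset.mem_univ, true_and, Finset.mem_singleton]
        constructor
        · rintro ⟨h1, h2, h3⟩
          obtain ⟨he1, he2, he3⟩ := F6 z' h1 h2 h3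
          rw [he1, he3 hcc0.symm]
        · rintro rfl
          exact ⟨F3' 1 (by decide), F4 1 (by decide) (fun _ => by decide), F5 1⟩
      · rw [if_neg (fun h => hcc0 (hbd_iff.mp h))]
        have hne12 : z 1 ≠ z (-1) := by
          intro h
          have := congrFun h c0
          simp [hz] at this
        have : (Finset.univ.filter (fun z' : Fin m → SignType =>
            z' ∉ κ ∧ inD t z' ∧ IsCh (insert z' κ))) = {z 1, z (-1)} := by
          ext z'
          simp only [Finset.mem_filter, Finset.mem_univ, true_and, Finset.mem_insert,
            Finset.mem_singleton]
          constructor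
          · rintro ⟨h1, h2, h3⟩
            obtain ⟨he1, he2, he3⟩ := F6 z' h1 h2 h3
            cases h : z' c0
            · exact absurd h he2
            · right; rw [he1, h]; congr 1 <;> decide
            · left; rw [he1, h]; congr 1 <;> decide
          · rintro (rfl | rfl)
            · exact ⟨F3' 1 (by decide), F4 1 (by decide) (fun h => absurd h.symm hcc0),
                F5 1⟩
            · exact ⟨F3' (-1) (by decide), F4 (-1) (by decide) (fun h => absurd h.symm hcc0),
                F5 (-1)⟩
        rw [this, Finset.card_insert_of_notMem (by simp [hne12]), Finset.card_singleton]
    · -- t < j : two extensions, boundary condition fails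
      have htlt : t < j := lt_of_le_of_ne htj htj'
      obtain ⟨y, hymem, hy⟩ := hget (t + 1) (by omega) (by omega) (by omega)
      obtain ⟨f, hfmem, hf⟩ := hget j (by omega) (by omega) (fun h => htj' h.symm)
      have hsuppf : supp f = Jset m j := supp_eq_Jset_of_ht hjm (hD f hfmem).1 hf
      have hfc : f c ≠ 0 := by
        rw [← mem_supp, hsuppf]
        exact hcJ
      rw [if_neg (fun h => hfc (h f hfmem))]
      -- the "lower bundle" W
      obtain ⟨W, hWy, hWc, hlow, hsub2⟩ : ∃ W : Finset (Fin m), W ⊆ supp y ∧ W.card = t - 1 ∧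
          (∀ x ∈ κ, ht x < t → sLe x (res y W)) ∧
          (∀ u : Fin m → SignType, u ∉ κ → ht u = t → IsCh (insert u κ) → W ⊆ supp u) := by
        by_cases ht2 : 2 ≤ t
        · obtain ⟨w, hwmem, hw⟩ := hget (t - 1) (by omega) (by omega) (by omega)
          have hwy : sLe w y := chain_sLe_of_ht_le hch hwmem hymem (by omega)
          have hwres : w = res y (supp w) := eq_res_of_sLe hwy
          refine ⟨supp w, supp_subset_of_sLe hwy, by rw [← ht, hw], ?_, ?_⟩
          · intro x hx hxt
            rw [← hwres]
            exact chain_sLe_of_ht_le hch hx hwmem (by omega)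
          · intro u hu htu hichu
            apply supp_subset_of_sLe
            exact chain_sLe_of_ht_le hichu (Finset.mem_insert_of_mem hwmem)
              (Finset.mem_insert_self _ _) (by rw [hw, htu]; omega)
        · have ht1' : t = 1 := by omega
          refine ⟨∅, Finset.empty_subset _, by rw [Finset.card_empty]; omega, ?_, ?_⟩
          · intro x hx hxt
            have := ht_pos (hD x hx).1
            omega
          · intro u _ _ _
            exact Finset.empty_subset _
      have hDcard : (supp y \ W).card = 2 := by
        rw [Finset.card_sdiff_of_subset hWy, ← ht, hy, hWc]
        omega
      -- the two candidate extensions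
      have hins_sub : ∀ c' ∈ supp y \ W, insert c' W ⊆ supp y := by
        intro c' hc'
        intro i hi
        rcases Finset.mem_insert.mp hi with rfl | hiW
        · exact (Finset.mem_sdiff.mp hc').1
        · exact hWy hiW
      have hsuppz : ∀ c' ∈ supp y \ W, supp (res y (insert c' W)) = insert c' W :=
        fun c' hc' => supp_res (hins_sub c' hc')
      have hhtz : ∀ c' ∈ supp y \ W, ht (res y (insert c' W)) = t := by
        intro c' hc'
        rw [ht, hsuppz c' hc',
          Finset.card_insert_of_notMem (Finset.mem_sdiff.mp hc').2, hWc]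
        omega
      have hzmem : ∀ c' ∈ supp y \ W,
          (res y (insert c' W)) ∉ κ ∧ inD j (res y (insert c' W)) ∧
            IsCh (insert (res y (insert c' W)) κ) := by
        intro c' hc'
        have hz0 : res y (insert c' W) ≠ 0 := by
          rw [ne_zero_iff_supp_nonempty, hsuppz c' hc']
          exact ⟨c', Finset.mem_insert_self _ _⟩
        have hchz : IsCh (insert (res y (insert c' W)) κ) := by
          apply isCh_insert hch
          intro x hx
          rcases lt_or_gt_of_ne (fun h => hhtne x hx h : ht x ≠ t) with hlt | hgt
          · exact Or.inl (sLe_trans (hlow x hx hlt)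
              (res_mono (Finset.subset_insert _ _)))
          · refine Or.inr (sLe_trans (sLe_res y _) ?_)
            exact chain_sLe_of_ht_le hch hymem hx (by omega)
        refine ⟨?_, ?_, hchz⟩
        · intro hmem
          exact hhtne _ hmem (hhtz c' hc')
        · exact sLe_downward (sLe_res y _) hz0 (hD y hymem)
      have hcomplete : ∀ u : Fin m → SignType, u ∉ κ → inD j u → IsCh (insert u κ) →
          ∃ c' ∈ supp y \ W, u = res y (insert c' W) := by
        intro u hu huD hichu
        have hhtu : ht u = t := hE u hu huD hichu
        have huy : sLe u y := by
          refine chain_sLe_of_ht_le hichu (Finset.mem_insert_self _ _)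
            (Finset.mem_insert_of_mem hymem) (by omega)
        have hWu : W ⊆ supp u := hsub2 u hu hhtu hichu
        have hcard1 : (supp u \ W).card = 1 := by
          rw [Finset.card_sdiff_of_subset hWu, ← ht, hhtu, hWc]
          omega
        obtain ⟨c', hc'⟩ := Finset.card_eq_one.mp hcard1
        have hc'mem : c' ∈ supp u \ W := hc' ▸ Finset.mem_singleton_self c'
        have hsuppu : supp u = insert c' W := by
          have h1 : W ∪ (supp u \ W) = supp u := Finset.union_sdiff_of_subset hWu
          rw [hc'] at h1
          rw [← h1]
          ext i
          simp only [Finset.mem_union, Finset.mem_insert, Finset.mem_singleton]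
          tauto
        refine ⟨c', ?_, ?_⟩
        · rw [Finset.mem_sdiff]
          exact ⟨supp_subset_of_sLe huy (Finset.mem_sdiff.mp hc'mem).1,
            (Finset.mem_sdiff.mp hc'mem).2⟩
        · rw [← hsuppu]
          exact eq_res_of_sLe huy
      -- conclude: the extension set is the image of the 2-element set
      have hEeq : (Finset.univ.filter (fun z : Fin m → SignType =>
          z ∉ κ ∧ inD j z ∧ IsCh (insert z κ)))
            = (supp y \ W).image (fun c' => res y (insert c' W)) := by
        ext u
        simp only [Finset.mem_filter, Finset.mem_univ, true_and, Finset.mem_image]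
        constructor
        · rintro ⟨h1, h2, h3⟩
          obtain ⟨c', hc', heq⟩ := hcomplete u h1 h2 h3
          exact ⟨c', hc', heq.symm⟩
        · rintro ⟨c', hc', rfl⟩
          exact hzmem c' hc'
      rw [hEeq, Finset.card_image_of_injOn, hDcard]
      intro c1 h1 c2 h2 heq
      have heq' : res y (insert c1 W) = res y (insert c2 W) := heq
      by_contra hne'
      have e1 : res y (insert c1 W) c1 = y c1 := by
        simp [res, Finset.mem_insert_self]
      have e2 : res y (insert c2 W) c1 = 0 := by
        have : c1 ∉ insert c2 W := by
          intro h
          rcases Finset.mem_insert.mp h with h' | h'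
          · exact hne' h'
          · exact (Finset.mem_sdiff.mp h1).2 h'
        simp [res, this]
      rw [heq'] at e1
      rw [e1] at e2
      exact (mem_supp.mp (Finset.mem_sdiff.mp h1).1) e2


def dAbs (S : Finset ℤ) : Prop :=
  (∀ v ∈ S, v ≠ 0) ∧ ∀ u ∈ S, ∀ v ∈ S, |u| = |v| → u = v

def rk (S : Finset ℤ) (v : ℤ) : ℕ := (S.filter (fun u => |u| ≤ |v|)).card

def posAlt (S : Finset ℤ) : Prop := dAbs S ∧ ∀ v ∈ S, (0 < v ↔ Odd (rk S v))

def negAlt (S : Finset ℤ) : Prop := dAbs S ∧ ∀ v ∈ S, (0 < v ↔ Even (rk S v))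

lemma dAbs_subset {S T : Finset ℤ} (h : T ⊆ S) (hS : dAbs S) : dAbs T :=
  ⟨fun v hv => hS.1 v (h hv), fun u hu v hv huv => hS.2 u (h hu) v (h hv) huv⟩

lemma dAbs_empty : dAbs ∅ := ⟨fun v hv => absurd hv (by simp), fun u hu => absurd hu (by simp)⟩

lemma posAlt_empty : posAlt ∅ := ⟨dAbs_empty, fun v hv => absurd hv (by simp)⟩

lemma negAlt_empty : negAlt ∅ := ⟨dAbs_empty, fun v hv => absurd hv (by simp)⟩

lemma not_posAlt_negAlt {S : Finset ℤ} (hne : S.Nonempty) : ¬ (posAlt S ∧ negAlt S) := by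
  rintro ⟨⟨_, hp⟩, ⟨_, hn⟩⟩
  obtain ⟨v, hv⟩ := hne
  have h1 := hp v hv
  have h2 := hn v hv
  rcases Nat.even_or_odd (rk S v) with he | ho
  · exact (Nat.not_odd_iff_even.mpr he) (h1.mp (h2.mpr he))
  · exact (Nat.not_odd_iff_even.mpr (h2.mp (h1.mpr ho))) ho

section MinExtract

variable {S : Finset ℤ} {v : ℤ}

lemma rk_min (hv : v ∈ S) (hd : dAbs S) (hmin : ∀ u ∈ S, |v| ≤ |u|) : rk S v = 1 := by
  have h : S.filter (fun u => |u| ≤ |v|) = {v} := by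
    ext u
    simp only [Finset.mem_filter, Finset.mem_singleton]
    constructor
    · rintro ⟨hu, hle⟩; exact hd.2 u hu v hv (le_antisymm hle (hmin u hu))
    · rintro rfl; exact ⟨hv, le_refl _⟩
  simp [rk, h]

lemma rk_erase (hv : v ∈ S) (hmin : ∀ u ∈ S, |v| ≤ |u|) {u : ℤ} (hu : u ∈ S.erase v) :
    rk S u = rk (S.erase v) u + 1 := by
  have hus : u ∈ S := Finset.mem_of_mem_erase hu
  have h : S.filter (fun w => |w| ≤ |u|)
      = insert v ((S.erase v).filter (fun w => |w| ≤ |u|)) := by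
    ext w
    simp only [Finset.mem_filter, Finset.mem_insert, Finset.mem_erase]
    constructor
    · rintro ⟨hw, hle⟩
      by_cases hwv : w = v
      · left; exact hwv
      · right; exact ⟨⟨hwv, hw⟩, hle⟩
    · rintro (rfl | ⟨⟨_, hw⟩, hle⟩)
      · exact ⟨hv, hmin u hus⟩
      · exact ⟨hw, hle⟩
  rw [rk, h, Finset.card_insert_of_notMem (by simp), rk]

lemma posAlt_iff_min (hv : v ∈ S) (hd : dAbs S) (hmin : ∀ u ∈ S, |v| ≤ |u|) :
    posAlt S ↔ (0 < v ∧ negAlt (S.erase v)) := by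
  constructor
  · rintro ⟨_, hp⟩
    refine ⟨(hp v hv).mpr (by rw [rk_min hv hd hmin]; exact odd_one),
      dAbs_subset (Finset.erase_subset _ _) hd, ?_⟩
    intro u hu
    have h := hp u (Finset.mem_of_mem_erase hu)
    rwa [rk_erase hv hmin hu, Nat.odd_add_one, Nat.not_odd_iff_even] at h
  · rintro ⟨hvpos, ⟨_, hn⟩⟩
    refine ⟨hd, ?_⟩
    intro u hu
    by_cases huv : u = v
    · subst huv
      rw [rk_min hu hd hmin]
      simp only [rk] at *
      constructor
      · intro _; decide
      · intro _; exact hvpos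
    · have hu' : u ∈ S.erase v := Finset.mem_erase.mpr ⟨huv, hu⟩
      rw [rk_erase hv hmin hu', Nat.odd_add_one, Nat.not_odd_iff_even]
      exact hn u hu'

lemma negAlt_iff_min (hv : v ∈ S) (hd : dAbs S) (hmin : ∀ u ∈ S, |v| ≤ |u|) :
    negAlt S ↔ (v < 0 ∧ posAlt (S.erase v)) := by
  constructor
  · rintro ⟨_, hn⟩
    have hv0 : ¬ (0 < v) := by
      intro h
      have := (hn v hv).mp h
      rw [rk_min hv hd hmin] at this
      simpa using this
    refine ⟨lt_of_le_of_ne (not_lt.mp hv0) (hd.1 v hv), dAbs_subset (Finset.erase_subset _ _) hd, ?_⟩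
    intro u hu
    have h := hn u (Finset.mem_of_mem_erase hu)
    rwa [rk_erase hv hmin hu, Nat.even_add_one, Nat.not_even_iff_odd] at h
  · rintro ⟨hvneg, ⟨_, hp⟩⟩
    refine ⟨hd, ?_⟩
    intro u hu
    by_cases huv : u = v
    · subst huv
      rw [rk_min hu hd hmin]
      simp only [Nat.even_iff]
      constructor
      · intro h; exact absurd h (not_lt.mpr hvneg.le)
      · omega
    · have hu' : u ∈ S.erase v := Finset.mem_erase.mpr ⟨huv, hu⟩
      rw [rk_erase hv hmin hu', Nat.even_add_one, Nat.not_even_iff_odd]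
      exact hp u hu'

end MinExtract


lemma card_filter_erase_add {α : Type*} [DecidableEq α] (s : Finset α) (a : α) (ha : a ∈ s)
    (p : α → Prop) [DecidablePred p] :
    (s.filter p).card = ((s.erase a).filter p).card + (if p a then 1 else 0) := by
  have h : s.filter p
      = if p a then insert a ((s.erase a).filter p) else (s.erase a).filter p := by
    conv_lhs => rw [← Finset.insert_erase ha]
    rw [Finset.filter_insert]
  rw [h]
  split
  · rw [Finset.card_insert_of_notMem
      (fun hmem => (Finset.notMem_erase a s) (Finset.mem_of_mem_filter _ hmem))]
  · simp

theorem key_parity : ∀ n : ℕ, ∀ S : Finset ℤ, S.card = n → dAbs S →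
    ((S.filter (fun v => posAlt (S.erase v))).card
      + (if posAlt S then 1 else 0) + (if negAlt S then 1 else 0)) % 2 = 0
  ∧ ((S.filter (fun v => negAlt (S.erase v))).card
      + (if posAlt S then 1 else 0) + (if negAlt S then 1 else 0)) % 2 = 0 := by
  intro n
  induction n using Nat.strong_induction_on with
  | _ n IH =>
    intro S hcard hd
    rcases Finset.eq_empty_or_nonempty S with rfl | hne
    · simp [posAlt_empty, negAlt_empty]
    · obtain ⟨v, hv, hmin⟩ := Finset.exists_min_image S (fun u => |u|) hne
      set T := S.erase v with hT
      have hvT : v ∉ T := Finset.notMem_erase _ _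
      have hST : S = insert v T := (Finset.insert_erase hv).symm
      have hdT : dAbs T := dAbs_subset (Finset.erase_subset _ _) hd
      have hTcard : T.card = n - 1 := by rw [hT, Finset.card_erase_of_mem hv, hcard]
      have hn1 : n - 1 < n := by
        have : 0 < n := by rw [← hcard]; exact Finset.card_pos.mpr ⟨v, hv⟩
        omega
      obtain ⟨IHpos, IHneg⟩ := IH (n - 1) hn1 T hTcard hdT
      -- pointwise rewriting of the filter over T
      have hptP : ∀ u ∈ T, (posAlt (S.erase u) ↔ (0 < v ∧ negAlt (T.erase u))) := by
        intro u hu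
        have huv : u ≠ v := (Finset.mem_erase.mp hu).1
        have hvSu : v ∈ S.erase u := Finset.mem_erase.mpr ⟨fun h => huv h.symm, hv⟩
        have hdSu : dAbs (S.erase u) := dAbs_subset (Finset.erase_subset _ _) hd
        have hminSu : ∀ w ∈ S.erase u, |v| ≤ |w| := fun w hw => hmin w (Finset.mem_of_mem_erase hw)
        rw [posAlt_iff_min hvSu hdSu hminSu, Finset.erase_right_comm]
      have hptN : ∀ u ∈ T, (negAlt (S.erase u) ↔ (v < 0 ∧ posAlt (T.erase u))) := by
        intro u hu
        have huv : u ≠ v := (Finset.mem_erase.mp hu).1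
        have hvSu : v ∈ S.erase u := Finset.mem_erase.mpr ⟨fun h => huv h.symm, hv⟩
        have hdSu : dAbs (S.erase u) := dAbs_subset (Finset.erase_subset _ _) hd
        have hminSu : ∀ w ∈ S.erase u, |v| ≤ |w| := fun w hw => hmin w (Finset.mem_of_mem_erase hw)
        rw [negAlt_iff_min hvSu hdSu hminSu, Finset.erase_right_comm]
      have E1 := card_filter_erase_add S v hv (fun u => posAlt (S.erase u))
      have E2 := card_filter_erase_add S v hv (fun u => negAlt (S.erase u))
      rw [← hT] at E1 E2
      have A : (T.filter (fun u => posAlt (S.erase u))).card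
          = if 0 < v then (T.filter (fun u => negAlt (T.erase u))).card else 0 := by
        by_cases hv0 : 0 < v
        · rw [if_pos hv0]
          congr 1
          apply Finset.filter_congr
          intro u hu
          simp [hptP u hu, hv0]
        · rw [if_neg hv0, Finset.card_eq_zero, Finset.filter_eq_empty_iff]
          intro u hu h
          exact hv0 ((hptP u hu).mp h).1
      have B : (T.filter (fun u => negAlt (S.erase u))).card
          = if v < 0 then (T.filter (fun u => posAlt (T.erase u))).card else 0 := by
        by_cases hv0 : v < 0
        · rw [if_pos hv0]
          congr 1
          apply Finset.filter_congr
          intro u hu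
          simp [hptN u hu, hv0]
        · rw [if_neg hv0, Finset.card_eq_zero, Finset.filter_eq_empty_iff]
          intro u hu h
          exact hv0 ((hptN u hu).mp h).1
      have C : posAlt S ↔ (0 < v ∧ negAlt T) := posAlt_iff_min hv hd hmin
      have D : negAlt S ↔ (v < 0 ∧ posAlt T) := negAlt_iff_min hv hd hmin
      have hv0 : v ≠ 0 := hd.1 v hv
      rcases lt_trichotomy v 0 with hsg | hsg | hsg
      · have hA : ¬ (0 < v) := by omega
        have hps : (if posAlt S then 1 else 0) = 0 := by
          rw [if_neg]; rw [C]; rintro ⟨h, _⟩; exact hA h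
        have hns : (if negAlt S then 1 else 0) = (if posAlt T then 1 else 0) := by
          by_cases h : posAlt T
          · rw [if_pos (D.mpr ⟨hsg, h⟩), if_pos h]
          · rw [if_neg (fun hh => h (D.mp hh).2), if_neg h]
        constructor
        · rw [E1, A, if_neg hA, hps, hns]
          omega
        · rw [E2, B, if_pos hsg, hps, hns]
          omega
      · exact absurd hsg hv0
      · have hA : ¬ (v < 0) := by omega
        have hps : (if posAlt S then 1 else 0) = (if negAlt T then 1 else 0) := by
          by_cases h : negAlt T
          · rw [if_pos (C.mpr ⟨hsg, h⟩), if_pos h]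
          · rw [if_neg (fun hh => h (C.mp hh).2), if_neg h]
        have hns : (if negAlt S then 1 else 0) = 0 := by
          rw [if_neg]; rw [D]; rintro ⟨h, _⟩; exact hA h
        constructor
        · rw [E1, A, if_pos hsg, hps, hns]
          omega
        · rw [E2, B, if_neg hA, hps, hns]
          omega


section Negation

variable {m : ℕ}

lemma sign_neg_zero_iff : ∀ a : SignType, -a = 0 ↔ a = 0 := by decide

lemma sign_neg_neg : ∀ a : SignType, -(-a) = a := by decide

lemma neg_apply (x : Fin m → SignType) (i : Fin m) : (-x) i = -(x i) := rfl

lemma negX_zero_iff (x : Fin m → SignType) : -x = 0 ↔ x = 0 := by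
  constructor
  · intro h
    funext i
    have := congrFun h i
    rw [neg_apply] at this
    exact (sign_neg_zero_iff (x i)).mp this
  · rintro rfl
    funext i
    rw [neg_apply]
    rfl

lemma negX_negX (x : Fin m → SignType) : -(-x) = x := by
  funext i
  rw [neg_apply, neg_apply, sign_neg_neg]

lemma negX_inj : Function.Injective (fun x : Fin m → SignType => -x) := by
  intro x y h
  have := congrArg Neg.neg h
  simpa only [negX_negX] using this

lemma sLe_neg {x y : Fin m → SignType} (h : sLe x y) : sLe (-x) (-y) := by
  intro i
  rcases h i with h' | h'
  · left
    rw [neg_apply, h']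
    rfl
  · right
    rw [neg_apply, neg_apply, h']

lemma inS_neg {j : ℕ} {x : Fin m → SignType} (h : inS j x) : inS j (-x) := by
  refine ⟨fun hh => h.1 ((negX_zero_iff x).mp hh), fun i hi => ?_⟩
  rw [neg_apply, h.2 i hi]
  rfl

lemma isCh_image_neg {σ : Finset (Fin m → SignType)} (hch : IsCh σ) :
    IsCh (σ.image (fun x => -x)) := by
  intro x hx y hy
  obtain ⟨x', hx', rfl⟩ := Finset.mem_image.mp hx
  obtain ⟨y', hy', rfl⟩ := Finset.mem_image.mp hy
  rcases hch x' hx' y' hy' with h | h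
  · exact Or.inl (sLe_neg h)
  · exact Or.inr (sLe_neg h)

lemma image_neg_neg (σ : Finset (Fin m → SignType)) :
    (σ.image (fun x => -x)).image (fun x => -x) = σ := by
  rw [Finset.image_image]
  have : ((fun x : Fin m → SignType => -x) ∘ (fun x => -x)) = id := by
    funext x
    simp only [Function.comp_apply, id_eq, negX_negX]
  rw [this, Finset.image_id]

lemma imageZ_neg_neg (S : Finset ℤ) :
    (S.image (fun v => -v)).image (fun v => -v) = S := by
  rw [Finset.image_image]
  have : ((fun v : ℤ => -v) ∘ (fun v => -v)) = id := by
    funext v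
    simp
  rw [this, Finset.image_id]

lemma dAbs_image_neg {S : Finset ℤ} : dAbs (S.image (fun v => -v)) ↔ dAbs S := by
  constructor
  · rintro ⟨h1, h2⟩
    constructor
    · intro v hv
      have := h1 (-v) (Finset.mem_image_of_mem _ hv)
      omega
    · intro u hu v hv huv
      have := h2 (-u) (Finset.mem_image_of_mem _ hu) (-v) (Finset.mem_image_of_mem _ hv)
        (by rw [abs_neg, abs_neg]; exact huv)
      omega
  · rintro ⟨h1, h2⟩
    constructor
    · intro v hv
      obtain ⟨u, hu, rfl⟩ := Finset.mem_image.mp hv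
      have := h1 u hu
      omega
    · intro u hu v hv huv
      obtain ⟨u', hu', rfl⟩ := Finset.mem_image.mp hu
      obtain ⟨v', hv', rfl⟩ := Finset.mem_image.mp hv
      rw [abs_neg, abs_neg] at huv
      rw [h2 u' hu' v' hv' huv]

lemma rk_image_neg (S : Finset ℤ) (v : ℤ) :
    rk (S.image (fun u => -u)) (-v) = rk S v := by
  rw [rk, rk]
  have h : (S.image (fun u => -u)).filter (fun u => |u| ≤ |(-v)|)
      = (S.filter (fun u => |u| ≤ |v|)).image (fun u => -u) := by
    ext u
    simp only [Finset.mem_filter, Finset.mem_image, abs_neg]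
    constructor
    · rintro ⟨⟨w, hw, rfl⟩, hle⟩
      exact ⟨w, ⟨hw, by rwa [abs_neg] at hle⟩, rfl⟩
    · rintro ⟨w, ⟨hw, hle⟩, rfl⟩
      exact ⟨⟨w, hw, rfl⟩, by rwa [abs_neg]⟩
  rw [h, Finset.card_image_of_injective _ neg_injective]

lemma posAlt_image_neg {S : Finset ℤ} : posAlt (S.image (fun v => -v)) ↔ negAlt S := by
  constructor
  · rintro ⟨hd, h⟩
    have hdS := dAbs_image_neg.mp hd
    refine ⟨hdS, ?_⟩
    intro v hv
    have h2 := h (-v) (Finset.mem_image_of_mem _ hv)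
    rw [rk_image_neg] at h2
    have hvne : v ≠ 0 := hdS.1 v hv
    constructor
    · intro hpos
      rcases Nat.even_or_odd (rk S v) with he | ho
      · exact he
      · have := h2.mpr ho
        omega
    · intro heven
      by_contra hnpos
      have : 0 < -v := by omega
      have := h2.mp this
      exact (Nat.not_odd_iff_even.mpr heven) this
  · rintro ⟨hd, h⟩
    refine ⟨dAbs_image_neg.mpr hd, ?_⟩
    intro v hv
    obtain ⟨u, hu, rfl⟩ := Finset.mem_image.mp hv
    rw [rk_image_neg]
    have huhne : u ≠ 0 := hd.1 u hu
    have h2 := h u hu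
    constructor
    · intro hpos
      rcases Nat.even_or_odd (rk S u) with he | ho
      · have := h2.mpr he
        omega
      · exact ho
    · intro hodd
      by_contra hnpos
      have : 0 < u := by omega
      have := h2.mp this
      exact (Nat.not_odd_iff_even.mpr this) hodd

lemma negAlt_image_neg {S : Finset ℤ} : negAlt (S.image (fun v => -v)) ↔ posAlt S := by
  constructor
  · intro h
    have := posAlt_image_neg.mpr h
    rwa [imageZ_neg_neg] at this
  · intro h
    apply posAlt_image_neg.mp
    rwa [imageZ_neg_neg]

lemma inS_coord_iff {j : ℕ} (c : Fin m) (hcv : (c : ℕ) = j) (x : Fin m → SignType) :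
    inS j x ↔ inD (j + 1) x ∧ x c = 0 := by
  constructor
  · intro h
    refine ⟨⟨⟨h.1, fun i hi => h.2 i (by omega)⟩, fun i hi => ?_⟩, h.2 c (le_of_eq hcv.symm)⟩
    rw [h.2 i (by omega)]
    decide
  · rintro ⟨⟨⟨h1, h2⟩, _⟩, h3⟩
    refine ⟨h1, fun i hi => ?_⟩
    rcases Nat.lt_or_ge (i : ℕ) (j + 1) with h | h
    · have : i = c := Fin.ext (by omega)
      rw [this]
      exact h3
    · exact h2 i h

lemma inD_coord_iff {j : ℕ} (c : Fin m) (hc : (c : ℕ) + 1 = j) (x : Fin m → SignType) :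
    inD j x ↔ inS j x ∧ x c ≠ -1 := by
  constructor
  · intro h
    exact ⟨h.1, h.2 c hc⟩
  · rintro ⟨h1, h2⟩
    refine ⟨h1, fun i hi => ?_⟩
    have : i = c := Fin.ext (by omega)
    rw [this]
    exact h2

lemma chain_coherent {σ : Finset (Fin m → SignType)} (hch : IsCh σ) {x y : Fin m → SignType}
    (hx : x ∈ σ) (hy : y ∈ σ) (c : Fin m) (hxc : x c = -1) (hyc : y c = 1) : False := by
  rcases hch x hx y hy with h | h
  · rcases h c with h' | h'
    · rw [hxc] at h'; exact absurd h' (by decide)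
    · rw [hxc, hyc] at h'; exact absurd h' (by decide)
  · rcases h c with h' | h'
    · rw [hyc] at h'; exact absurd h' (by decide)
    · rw [hxc, hyc] at h'; exact absurd h' (by decide)

end Negation

section Counting

variable {m : ℕ} (lam : (Fin m → SignType) → ℤ)

def lab (σ : Finset (Fin m → SignType)) : Finset ℤ := σ.image lam

def posG (σ : Finset (Fin m → SignType)) : Prop :=
  (lab lam σ).card = σ.card ∧ posAlt (lab lam σ)

def negG (σ : Finset (Fin m → SignType)) : Prop :=
  (lab lam σ).card = σ.card ∧ negAlt (lab lam σ)

noncomputable def sphF (m j : ℕ) : Finset (Finset (Fin m → SignType)) :=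
  Finset.univ.filter (fun σ => IsCh σ ∧ (∀ x ∈ σ, inS j x) ∧ σ.card = j)

noncomputable def ballF (m j : ℕ) : Finset (Finset (Fin m → SignType)) :=
  Finset.univ.filter (fun σ => IsCh σ ∧ (∀ x ∈ σ, inD j x) ∧ σ.card = j)

noncomputable def PP (m : ℕ) (lam : (Fin m → SignType) → ℤ) (j : ℕ) : ℕ :=
  ((sphF m j).filter (posG lam)).card

variable {lam}

section WithHyps

variable (hr : ∀ x : Fin m → SignType, x ≠ 0 → 1 ≤ |lam x|)
variable (hcp : ∀ x y : Fin m → SignType, x ≠ 0 → y ≠ 0 → sLe x y → lam x + lam y ≠ 0)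

include hr hcp in
lemma dAbs_lab {σ : Finset (Fin m → SignType)} (hch : IsCh σ) (h0 : ∀ x ∈ σ, x ≠ 0) :
    dAbs (lab lam σ) := by
  constructor
  · intro v hv
    obtain ⟨x, hx, rfl⟩ := Finset.mem_image.mp hv
    have := hr x (h0 x hx)
    intro h
    rw [h] at this
    simp at this
  · intro u hu v hv huv
    obtain ⟨x, hx, rfl⟩ := Finset.mem_image.mp hu
    obtain ⟨y, hy, rfl⟩ := Finset.mem_image.mp hv
    rcases abs_eq_abs.mp huv with h | h
    · exact h
    · exfalso
      rcases hch x hx y hy with hle | hle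
      · exact hcp x y (h0 x hx) (h0 y hy) hle (by omega)
      · exact hcp y x (h0 y hy) (h0 x hx) hle (by omega)

lemma lab_erase {σ : Finset (Fin m → SignType)} (hinj : Set.InjOn lam σ)
    {x : Fin m → SignType} (hx : x ∈ σ) :
    lab lam (σ.erase x) = (lab lam σ).erase (lam x) := by
  ext v
  simp only [lab, Finset.mem_image, Finset.mem_erase]
  constructor
  · rintro ⟨y, hy, rfl⟩
    obtain ⟨hyx, hyσ⟩ := hy
    refine ⟨fun h => hyx (hinj hyσ hx h), ⟨y, hyσ, rfl⟩⟩
  · rintro ⟨hvx, y, hy, rfl⟩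
    exact ⟨y, ⟨fun h => hvx (by rw [← h]), hy⟩, rfl⟩

/-- the deletion count over a chain, mod 2, equals the full-alternation indicator -/
lemma zmod2_helper : ∀ a b c : ZMod 2, a + b + c = 0 → a = b + c := by decide

lemma even_cast_zmod2 {n : ℕ} (h : n % 2 = 0) : (n : ZMod 2) = 0 := by
  obtain ⟨k, rfl⟩ := Nat.dvd_of_mod_eq_zero h
  push_cast
  rw [show (2 : ZMod 2) = (0 : ZMod 2) by decide]
  ring

include hr hcp in
lemma facet_parity {σ : Finset (Fin m → SignType)} (hch : IsCh σ) (h0 : ∀ x ∈ σ, x ≠ 0) :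
    ((σ.filter (fun x => posG lam (σ.erase x))).card : ZMod 2)
      = (if posG lam σ then 1 else 0) + (if negG lam σ then 1 else 0) := by
  by_cases hinj : Set.InjOn lam σ
  · -- injective case: transport to the label set
    have hcards : ∀ x ∈ σ, (lab lam (σ.erase x)).card = (σ.erase x).card :=
      fun x hx => Finset.card_image_iff.mpr (hinj.mono (fun y hy => Finset.mem_of_mem_erase hy))
    have hfiltereq : (σ.filter (fun x => posG lam (σ.erase x))).card
        = ((lab lam σ).filter (fun v => posAlt ((lab lam σ).erase v))).card := by
      apply Finset.card_bij (fun x _ => lam x)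
      · intro x hx
        obtain ⟨hxσ, hpos⟩ := Finset.mem_filter.mp hx
        refine Finset.mem_filter.mpr ⟨Finset.mem_image_of_mem lam hxσ, ?_⟩
        rw [← lab_erase hinj hxσ]
        exact hpos.2
      · intro x hx y hy h
        exact hinj (Finset.mem_of_mem_filter _ hx) (Finset.mem_of_mem_filter _ hy) h
      · intro v hv
        obtain ⟨hvim, hpos⟩ := Finset.mem_filter.mp hv
        obtain ⟨x, hxσ, rfl⟩ := Finset.mem_image.mp hvim
        refine ⟨x, Finset.mem_filter.mpr ⟨hxσ, ?_, ?_⟩, rfl⟩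
        · exact hcards x hxσ
        · rw [lab_erase hinj hxσ]
          exact hpos
    have hd : dAbs (lab lam σ) := dAbs_lab hr hcp hch h0
    have hkey := (key_parity (lab lam σ).card (lab lam σ) rfl hd).1
    have hGP : posG lam σ ↔ posAlt (lab lam σ) :=
      ⟨fun h => h.2, fun h => ⟨Finset.card_image_iff.mpr hinj, h⟩⟩
    have hGN : negG lam σ ↔ negAlt (lab lam σ) :=
      ⟨fun h => h.2, fun h => ⟨Finset.card_image_iff.mpr hinj, h⟩⟩
    rw [hfiltereq]
    have := zmod2_helper (((lab lam σ).filter (fun v => posAlt ((lab lam σ).erase v))).card : ZMod 2)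
      ((if posAlt (lab lam σ) then 1 else 0) : ZMod 2)
      ((if negAlt (lab lam σ) then 1 else 0) : ZMod 2) ?_
    · rw [this]
      congr 1
      · by_cases h : posAlt (lab lam σ) <;> simp [h, hGP]
      · by_cases h : negAlt (lab lam σ) <;> simp [h, hGN]
    · have hcast : ((((lab lam σ).filter (fun v => posAlt ((lab lam σ).erase v))).card
          + (if posAlt (lab lam σ) then 1 else 0) + (if negAlt (lab lam σ) then 1 else 0) : ℕ)
            : ZMod 2) = 0 := even_cast_zmod2 hkey
      push_cast at hcast
      convert hcast using 2 <;> by_cases h1 : posAlt (lab lam σ) <;>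
        by_cases h2 : negAlt (lab lam σ) <;> simp [h1, h2]
  · -- non-injective case: the count is even and both indicators vanish
    have hninj := hinj
    rw [Set.InjOn] at hinj
    push_neg at hinj
    obtain ⟨x0, hx0, x1, hx1, heq01, hne01⟩ := hinj
    have hx0' : x0 ∈ σ := hx0
    have hx1' : x1 ∈ σ := hx1
    have hsub : σ.filter (fun x => posG lam (σ.erase x)) ⊆ {x0, x1} := by
      intro x hx
      obtain ⟨hxσ, hpos⟩ := Finset.mem_filter.mp hx
      by_contra hmem
      simp only [Finset.mem_insert, Finset.mem_singleton] at hmem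
      push_neg at hmem
      have h0mem : x0 ∈ σ.erase x := Finset.mem_erase.mpr ⟨fun h => hmem.1 h.symm, hx0'⟩
      have h1mem : x1 ∈ σ.erase x := Finset.mem_erase.mpr ⟨fun h => hmem.2 h.symm, hx1'⟩
      have : Set.InjOn lam (σ.erase x) := Finset.card_image_iff.mp hpos.1
      exact hne01 (this h0mem h1mem heq01)
    have hlabeq : lab lam (σ.erase x0) = lab lam (σ.erase x1) := by
      ext v
      simp only [lab, Finset.mem_image]
      constructor
      · rintro ⟨y, hy, rfl⟩
        obtain ⟨hyx, hyσ⟩ := Finset.mem_erase.mp hy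
        by_cases h : y = x1
        · exact ⟨x0, Finset.mem_erase.mpr ⟨hne01, hx0'⟩, by rw [h]; exact heq01⟩
        · exact ⟨y, Finset.mem_erase.mpr ⟨h, hyσ⟩, rfl⟩
      · rintro ⟨y, hy, rfl⟩
        obtain ⟨hyx, hyσ⟩ := Finset.mem_erase.mp hy
        by_cases h : y = x0
        · exact ⟨x1, Finset.mem_erase.mpr ⟨Ne.symm hne01, hx1'⟩, by rw [h]; exact heq01.symm⟩
        · exact ⟨y, Finset.mem_erase.mpr ⟨h, hyσ⟩, rfl⟩
    have hcardeq : (σ.erase x0).card = (σ.erase x1).card := by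
      rw [Finset.card_erase_of_mem hx0', Finset.card_erase_of_mem hx1']
    have hiff : posG lam (σ.erase x0) ↔ posG lam (σ.erase x1) := by
      unfold posG
      rw [hlabeq, hcardeq]
    have hGP : ¬ posG lam σ := fun h => hninj (Finset.card_image_iff.mp h.1)
    have hGN : ¬ negG lam σ := fun h => hninj (Finset.card_image_iff.mp h.1)
    rw [if_neg hGP, if_neg hGN]
    by_cases h0f : x0 ∈ σ.filter (fun x => posG lam (σ.erase x))
    · have h1f : x1 ∈ σ.filter (fun x => posG lam (σ.erase x)) :=
        Finset.mem_filter.mpr ⟨hx1', hiff.mp (Finset.mem_filter.mp h0f).2⟩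
      have hfeq : σ.filter (fun x => posG lam (σ.erase x)) = {x0, x1} := by
        apply Finset.Subset.antisymm hsub
        intro x hx
        rcases Finset.mem_insert.mp hx with rfl | hx'
        · exact h0f
        · rw [Finset.mem_singleton] at hx'
          subst hx'
          exact h1f
      rw [hfeq, Finset.card_insert_of_notMem (by simp [hne01]), Finset.card_singleton]
      simp
      decide
    · have h1f : x1 ∉ σ.filter (fun x => posG lam (σ.erase x)) := by
        intro h
        exact h0f (Finset.mem_filter.mpr ⟨hx0', hiff.mpr (Finset.mem_filter.mp h).2⟩)
      have hfeq : σ.filter (fun x => posG lam (σ.erase x)) = ∅ := by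
        rw [Finset.eq_empty_iff_forall_notMem]
        intro x hx
        rcases Finset.mem_insert.mp (hsub hx) with rfl | hx'
        · exact h0f hx
        · rw [Finset.mem_singleton] at hx'
          subst hx'
          exact h1f hx
      rw [hfeq]
      simp

variable (hod : ∀ x : Fin m → SignType, x ≠ 0 → lam (-x) = -lam x)

include hod in
lemma lab_image_neg {σ : Finset (Fin m → SignType)} (h0 : ∀ x ∈ σ, x ≠ 0) :
    lab lam (σ.image (fun x => -x)) = (lab lam σ).image (fun v => -v) := by
  unfold lab
  rw [Finset.image_image, Finset.image_image]
  apply Finset.image_congr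
  intro x hx
  exact hod x (h0 x hx)

lemma facet_top {j : ℕ} (hjm : j ≤ m) (hj : 1 ≤ j) {σ : Finset (Fin m → SignType)}
    (hch : IsCh σ) (hin : ∀ x ∈ σ, inS j x) (hcard : σ.card = j) :
    ∃ x ∈ σ, supp x = Jset m j := by
  have himg := facet_image hjm hch hin hcard
  have : j ∈ σ.image ht := by
    rw [himg]
    exact Finset.mem_Icc.mpr ⟨hj, le_refl j⟩
  obtain ⟨x, hx, hxj⟩ := Finset.mem_image.mp this
  exact ⟨x, hx, supp_eq_Jset_of_ht hjm (hin x hx) hxj⟩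

include hr hcp hod in
theorem step {j : ℕ} (hjm : j + 1 ≤ m) :
    (PP m lam (j + 1) : ZMod 2) = (PP m lam j : ZMod 2) := by
  have hjm' : j < m := hjm
  obtain ⟨c, hc⟩ : ∃ c : Fin m, (c : ℕ) + 1 = j + 1 := ⟨⟨j, hjm'⟩, rfl⟩
  -- membership unfolding helpers
  have hball : ∀ σ, σ ∈ ballF m (j+1) ↔
      (IsCh σ ∧ (∀ x ∈ σ, inD (j+1) x) ∧ σ.card = j + 1) := by
    intro σ
    simp [ballF]
  have hsph : ∀ (k : ℕ) σ, σ ∈ sphF m k ↔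
      (IsCh σ ∧ (∀ x ∈ σ, inS k x) ∧ σ.card = k) := by
    intro k σ
    simp [sphF]
  -- the incidence set
  set T : Finset ((Finset (Fin m → SignType)) × (Fin m → SignType)) :=
    ((ballF m (j+1)) ×ˢ (Finset.univ : Finset (Fin m → SignType))).filter
      (fun p => p.2 ∈ p.1 ∧ posG lam (p.1.erase p.2)) with hTdef
  have hTmem : ∀ p, p ∈ T ↔ (p.1 ∈ ballF m (j+1) ∧ p.2 ∈ p.1 ∧ posG lam (p.1.erase p.2)) := by
    intro p
    rw [hTdef, Finset.mem_filter, Finset.mem_product]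
    simp only [Finset.mem_univ, and_true]
  -- fiberwise over facets
  have hTA : T.card = ∑ σ ∈ ballF m (j+1), (σ.filter (fun x => posG lam (σ.erase x))).card := by
    rw [Finset.card_eq_sum_card_fiberwise (f := Prod.fst) (t := ballF m (j+1))
      (fun p hp => ((hTmem p).mp hp).1)]
    apply Finset.sum_congr rfl
    intro σ hσ
    apply Finset.card_bij (fun p _ => p.2)
    · intro p hp
      obtain ⟨hpT, hfst⟩ := Finset.mem_filter.mp hp
      obtain ⟨h1, h2, h3⟩ := (hTmem p).mp hpT
      rw [hfst] at h2 h3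
      exact Finset.mem_filter.mpr ⟨h2, h3⟩
    · intro p1 hp1 p2 hp2 heq
      have e1 := (Finset.mem_filter.mp hp1).2
      have e2 := (Finset.mem_filter.mp hp2).2
      exact Prod.ext (e1.trans e2.symm) heq
    · intro x hx
      obtain ⟨hxσ, hpos⟩ := Finset.mem_filter.mp hx
      exact ⟨(σ, x), Finset.mem_filter.mpr ⟨(hTmem (σ, x)).mpr ⟨hσ, hxσ, hpos⟩, rfl⟩, rfl⟩
  -- fiberwise over doors
  set doorF : Finset (Finset (Fin m → SignType)) := Finset.univ.filter
    (fun κ => IsCh κ ∧ (∀ x ∈ κ, inD (j+1) x) ∧ κ.card = j ∧ posG lam κ) with hdoorFdef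
  have hdoor : ∀ κ, κ ∈ doorF ↔
      (IsCh κ ∧ (∀ x ∈ κ, inD (j+1) x) ∧ κ.card = j ∧ posG lam κ) := by
    intro κ
    simp [hdoorFdef]
  have hTB : T.card = ∑ κ ∈ doorF, (Finset.univ.filter (fun z : Fin m → SignType =>
      z ∉ κ ∧ inD (j+1) z ∧ IsCh (insert z κ))).card := by
    have hmapsto : ∀ p ∈ T, p.1.erase p.2 ∈ doorF := by
      intro p hp
      obtain ⟨h1, h2, h3⟩ := (hTmem p).mp hp
      obtain ⟨hch, hin, hcard⟩ := (hball p.1).mp h1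
      refine (hdoor _).mpr ⟨isCh_subset (Finset.erase_subset _ _) hch,
        fun x hx => hin x (Finset.mem_of_mem_erase hx), ?_, h3⟩
      rw [Finset.card_erase_of_mem h2, hcard]
      omega
    rw [Finset.card_eq_sum_card_fiberwise hmapsto]
    apply Finset.sum_congr rfl
    intro κ hκ
    apply Finset.card_bij (fun p _ => p.2)
    · intro p hp
      obtain ⟨hpT, hfib⟩ := Finset.mem_filter.mp hp
      obtain ⟨h1, h2, h3⟩ := (hTmem p).mp hpT
      obtain ⟨hch, hin, hcard⟩ := (hball p.1).mp h1
      refine Finset.mem_filter.mpr ⟨Finset.mem_univ _, ?_, hin p.2 h2, ?_⟩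
      · rw [← hfib]
        exact Finset.notMem_erase _ _
      · rw [← hfib, Finset.insert_erase h2]
        exact hch
    · intro p1 hp1 p2 hp2 heq
      have e1 := (Finset.mem_filter.mp hp1).2
      have e2 := (Finset.mem_filter.mp hp2).2
      have m1 := ((hTmem p1).mp (Finset.mem_filter.mp hp1).1).2.1
      have m2 := ((hTmem p2).mp (Finset.mem_filter.mp hp2).1).2.1
      have : p1.1 = p2.1 := by
        rw [← Finset.insert_erase m1, ← Finset.insert_erase m2, e1, e2, heq]
      exact Prod.ext this heq
    · intro z hz
      obtain ⟨-, hz1, hz2, hz3⟩ := Finset.mem_filter.mp hz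
      obtain ⟨hch, hin, hcard, hpos⟩ := (hdoor κ).mp hκ
      have hins : insert z κ ∈ ballF m (j+1) := by
        refine (hball _).mpr ⟨hz3, ?_, ?_⟩
        · intro x hx
          rcases Finset.mem_insert.mp hx with rfl | hx'
          · exact hz2
          · exact hin x hx'
        · rw [Finset.card_insert_of_notMem hz1, hcard]
      refine ⟨(insert z κ, z), Finset.mem_filter.mpr ⟨(hTmem _).mpr
        ⟨hins, Finset.mem_insert_self _ _, ?_⟩, ?_⟩, rfl⟩
      · rw [Finset.erase_insert hz1]
        exact hpos
      · rw [Finset.erase_insert hz1]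
  -- side A mod 2
  have hTAmod : (T.card : ZMod 2)
      = (((ballF m (j+1)).filter (posG lam)).card : ZMod 2)
        + (((ballF m (j+1)).filter (negG lam)).card : ZMod 2) := by
    rw [hTA, Nat.cast_sum]
    rw [Finset.sum_congr rfl (fun σ hσ => by
      obtain ⟨hch, hin, hcard⟩ := (hball σ).mp hσ
      exact facet_parity hr hcp hch (fun x hx => (hin x hx).1.1))]
    rw [Finset.sum_add_distrib, Finset.sum_boole, Finset.sum_boole]
  -- side B mod 2
  have hTBmod : (T.card : ZMod 2) = (PP m lam j : ZMod 2) := by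
    rw [hTB, Nat.cast_sum]
    rw [Finset.sum_congr rfl (fun κ hκ => by
      obtain ⟨hch, hin, hcard, hpos⟩ := (hdoor κ).mp hκ
      rw [ext_count (by omega) hjm c hc hch hin (by omega)])]
    have hcast : ∀ κ ∈ doorF, ((if (∀ x ∈ κ, x c = 0) then 1 else 2 : ℕ) : ZMod 2)
        = if (∀ x ∈ κ, x c = 0) then (1 : ZMod 2) else 0 := by
      intro κ _
      by_cases h : ∀ x ∈ κ, x c = 0
      · rw [if_pos h, if_pos h]
        rfl
      · rw [if_neg h, if_neg h]
        decide
    rw [Finset.sum_congr rfl hcast, Finset.sum_boole]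
    congr 1
    have : doorF.filter (fun κ => ∀ x ∈ κ, x c = 0) = (sphF m j).filter (posG lam) := by
      ext κ
      rw [Finset.mem_filter, hdoor κ, Finset.mem_filter, hsph j κ]
      constructor
      · rintro ⟨⟨hch, hin, hcard, hpos⟩, hbd⟩
        refine ⟨⟨hch, fun x hx => ?_, hcard⟩, hpos⟩
        exact (inS_coord_iff c (by omega) x).mpr ⟨hin x hx, hbd x hx⟩
      · rintro ⟨⟨hch, hin, hcard⟩, hpos⟩
        refine ⟨⟨hch, fun x hx => ((inS_coord_iff c (by omega) x).mp (hin x hx)).1, hcard, hpos⟩,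
          fun x hx => ((inS_coord_iff c (by omega) x).mp (hin x hx)).2⟩
    rw [this]
    rfl
  -- the sphere splits into the two hemispheres
  have hsplit : PP m lam (j+1)
      = ((ballF m (j+1)).filter (posG lam)).card + ((ballF m (j+1)).filter (negG lam)).card := by
    set A := (sphF m (j+1)).filter (posG lam) with hAdef
    have h1 : (A.filter (fun σ => ∃ x ∈ σ, x c = -1)).card
        + (A.filter (fun σ => ¬ ∃ x ∈ σ, x c = -1)).card = A.card :=
      Finset.card_filter_add_card_filter_not _
    have h2 : A.filter (fun σ => ¬ ∃ x ∈ σ, x c = -1) = (ballF m (j+1)).filter (posG lam) := by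
      ext σ
      constructor
      · intro hmem
        obtain ⟨hA', hnB⟩ := Finset.mem_filter.mp hmem
        obtain ⟨hsphm, hpos⟩ := Finset.mem_filter.mp hA'
        obtain ⟨hch, hin, hcard⟩ := (hsph (j+1) σ).mp hsphm
        push_neg at hnB
        exact Finset.mem_filter.mpr ⟨(hball σ).mpr ⟨hch,
          fun x hx => (inD_coord_iff c hc x).mpr ⟨hin x hx, hnB x hx⟩, hcard⟩, hpos⟩
      · intro hmem
        obtain ⟨hballm, hpos⟩ := Finset.mem_filter.mp hmem
        obtain ⟨hch, hin, hcard⟩ := (hball σ).mp hballm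
        refine Finset.mem_filter.mpr ⟨Finset.mem_filter.mpr ⟨(hsph (j+1) σ).mpr ⟨hch,
          fun x hx => ((inD_coord_iff c hc x).mp (hin x hx)).1, hcard⟩, hpos⟩, ?_⟩
        push_neg
        exact fun x hx => ((inD_coord_iff c hc x).mp (hin x hx)).2
    have h3 : (A.filter (fun σ => ∃ x ∈ σ, x c = -1)).card
        = ((ballF m (j+1)).filter (negG lam)).card := by
      apply Finset.card_bij (fun σ _ => σ.image (fun x => -x))
      · intro σ hσ
        obtain ⟨hA, hB⟩ := Finset.mem_filter.mp hσ
        obtain ⟨hsphm, hpos⟩ := Finset.mem_filter.mp hA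
        obtain ⟨hch, hin, hcard⟩ := (hsph (j+1) σ).mp hsphm
        obtain ⟨x0, hx0, hx0c⟩ := hB
        have h0 : ∀ x ∈ σ, x ≠ 0 := fun x hx => (hin x hx).1
        refine Finset.mem_filter.mpr ⟨(hball _).mpr ⟨isCh_image_neg hch, ?_, ?_⟩, ?_, ?_⟩
        · intro y hy
          obtain ⟨x, hx, rfl⟩ := Finset.mem_image.mp hy
          refine (inD_coord_iff c hc _).mpr ⟨inS_neg (hin x hx), ?_⟩
          rw [neg_apply]
          intro hxc
          have : x c = 1 := by
            cases h : x c
            · rw [h] at hxc; exact absurd hxc (by decide)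
            · rw [h] at hxc; exact absurd hxc (by decide)
            · rfl
          exact chain_coherent hch hx0 hx c hx0c this
        · rw [Finset.card_image_of_injective _ negX_inj, hcard]
        · rw [lab_image_neg hod h0, Finset.card_image_of_injective _ neg_injective,
            Finset.card_image_of_injective _ negX_inj]
          exact hpos.1
        · rw [lab_image_neg hod h0]
          exact negAlt_image_neg.mpr hpos.2
      · intro σ1 hσ1 σ2 hσ2 heq
        have := congrArg (fun s => Finset.image (fun x : Fin m → SignType => -x) s) heq
        simpa only [image_neg_neg] using this
      · intro σ' hσ'
        obtain ⟨hballm, hcards, hneg⟩ : σ' ∈ ballF m (j+1) ∧ (lab lam σ').card = σ'.card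
            ∧ negAlt (lab lam σ') := by
          obtain ⟨h1', h2'⟩ := Finset.mem_filter.mp hσ'
          exact ⟨h1', h2'.1, h2'.2⟩
        obtain ⟨hch, hin, hcard⟩ := (hball σ').mp hballm
        have h0 : ∀ x ∈ σ', x ≠ 0 := fun x hx => (hin x hx).1.1
        have hsphm : σ'.image (fun x => -x) ∈ sphF m (j+1) := by
          refine (hsph (j+1) _).mpr ⟨isCh_image_neg hch, ?_, ?_⟩
          · intro y hy
            obtain ⟨x, hx, rfl⟩ := Finset.mem_image.mp hy
            exact inS_neg (hin x hx).1
          · rw [Finset.card_image_of_injective _ negX_inj, hcard]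
        have hmemA : σ'.image (fun x => -x) ∈ A := by
          refine Finset.mem_filter.mpr ⟨hsphm, ?_, ?_⟩
          · rw [lab_image_neg hod h0, Finset.card_image_of_injective _ neg_injective,
              Finset.card_image_of_injective _ negX_inj]
            exact hcards
          · rw [lab_image_neg hod h0]
            exact posAlt_image_neg.mpr hneg
        have hB : ∃ y ∈ σ'.image (fun x => -x), y c = -1 := by
          obtain ⟨x, hx, hsuppx⟩ := facet_top (j := j + 1) hjm (Nat.le_add_left 1 j) hch
            (fun y hy => (hin y hy).1) hcard
          have hcj : (c : ℕ) < j + 1 := hc ▸ Nat.lt_succ_self (c : ℕ)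
          have hxc : x c ≠ 0 := by
            rw [← mem_supp, hsuppx]
            exact mem_Jset.mpr hcj
          have hxc1 : x c = 1 := by
            have h2' := ((inD_coord_iff c hc x).mp (hin x hx)).2
            cases h : x c
            · exact absurd h hxc
            · exact absurd h h2'
            · rfl
          refine ⟨-x, Finset.mem_image_of_mem _ hx, ?_⟩
          rw [neg_apply, hxc1]
        exact ⟨σ'.image (fun x => -x), Finset.mem_filter.mpr ⟨hmemA, hB⟩, image_neg_neg σ'⟩
    have h2' := congrArg Finset.card h2
    have hPP : PP m lam (j+1) = A.card := rfl
    rw [hPP, ← h1, h2', h3]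
    exact Nat.add_comm _ _
  have : (PP m lam (j+1) : ZMod 2) = (T.card : ZMod 2) := by
    rw [hsplit, Nat.cast_add, hTAmod]
  rw [this, hTBmod]


include hr hcp hod in
theorem PP_odd : ∀ j, j ≤ m → (PP m lam j : ZMod 2) = 1 := by
  intro j
  induction j with
  | zero =>
    intro _
    have hbase : PP m lam 0 = 1 := by
      have hsph0 : sphF m 0 = {∅} := by
        ext σ
        simp only [sphF, Finset.mem_filter, Finset.mem_univ, true_and, Finset.mem_singleton]
        constructor
        · rintro ⟨-, -, hcard⟩
          exact Finset.card_eq_zero.mp hcard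
        · rintro rfl
          exact ⟨fun x hx => absurd hx (Finset.notMem_empty x),
            fun x hx => absurd hx (Finset.notMem_empty x), Finset.card_empty⟩
      have hpos : posG lam (∅ : Finset (Fin m → SignType)) := by
        constructor
        · rw [lab, Finset.image_empty]
          rfl
        · rw [lab, Finset.image_empty]
          exact posAlt_empty
      rw [PP, hsph0, Finset.filter_singleton, if_pos hpos, Finset.card_singleton]
    rw [hbase]
    rfl
  | succ n ih =>
    intro h
    rw [step hr hcp hod h]
    exact ih (by omega)

end WithHyps


end Counting

end Oct

open scoped Classical in
/-- octahedral Tucker lemma: if `λ : Ω^m \ {0^m} → {±1, …, ±q}`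
satisfies `λ(-x) = -λ(x)` and `λ(x) + λ(y) ≠ 0` whenever `x ⪯ y`, then `q ≥ m`. -/
theorem stmt13 (m q : ℕ) (lam : (Fin m → SignType) → ℤ)
    (hrange : ∀ x : Fin m → SignType, x ≠ 0 → 1 ≤ |lam x| ∧ |lam x| ≤ (q : ℤ))
    (hodd : ∀ x : Fin m → SignType, x ≠ 0 → lam (-x) = -lam x)
    (hcomp : ∀ x y : Fin m → SignType, x ≠ 0 → y ≠ 0 → sLe x y → lam x + lam y ≠ 0) :
    m ≤ q := by
  have hr : ∀ x : Fin m → SignType, x ≠ 0 → 1 ≤ |lam x| := fun x hx => (hrange x hx).1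
  have h1 : (Oct.PP m lam m : ZMod 2) = 1 := Oct.PP_odd hr hcomp hodd m (le_refl m)
  have h2 : Oct.PP m lam m ≠ 0 := by
    intro h
    rw [h] at h1
    exact absurd h1 (by decide)
  obtain ⟨σ, hσ⟩ := Finset.card_pos.mp (Nat.pos_of_ne_zero h2)
  obtain ⟨hmem, hlabcard, hposAlt⟩ : σ ∈ Oct.sphF m m ∧ (Oct.lab lam σ).card = σ.card
      ∧ Oct.posAlt (Oct.lab lam σ) := by
    obtain ⟨ha, hb⟩ := Finset.mem_filter.mp hσ
    exact ⟨ha, hb.1, hb.2⟩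
  obtain ⟨hch, hin, hcard⟩ : Oct.IsCh σ ∧ (∀ x ∈ σ, Oct.inS m x) ∧ σ.card = m := by
    have := Finset.mem_filter.mp hmem
    exact this.2
  have hd : Oct.dAbs (Oct.lab lam σ) := hposAlt.1
  set N : Finset ℕ := (Oct.lab lam σ).image Int.natAbs with hNdef
  have hNcard : N.card = m := by
    rw [hNdef, Finset.card_image_of_injOn, hlabcard, hcard]
    intro u hu v hv huv
    apply hd.2 u hu v hv
    rw [Int.abs_eq_natAbs, Int.abs_eq_natAbs, huv]
  have hNsub : N ⊆ Finset.Icc 1 q := by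
    intro a ha
    obtain ⟨v, hv, rfl⟩ := Finset.mem_image.mp ha
    obtain ⟨x, hx, rfl⟩ := Finset.mem_image.mp hv
    have hx0 : x ≠ 0 := (hin x hx).1
    obtain ⟨hb1, hb2⟩ := hrange x hx0
    rw [Int.abs_eq_natAbs] at hb1 hb2
    rw [Finset.mem_Icc]
    omega
  have := Finset.card_le_card hNsub
  rw [hNcard, Nat.card_Icc] at this
  omega
end

section
/- Soundness of the grammar G_n: every word w such that the judgment ⊢_{G_n} S(w) is derivable satisfies w ∈ O_n. More precisely, for every derivable judgment ⊢_{G_n} I(s_1, ..., s_n), the concatenation s_1···s_n belongs to O_n. -/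
/-- The interleaved sequence `x_1, y_1, x_2, y_2, …, x_n, y_n` of the components
of two `n`-tuples of words (`0`-indexed: position `2t` is `x_{t+1}`, position
`2t+1` is `y_{t+1}`; positions `≥ 2n` are padded with `ε`). -/
def interleave (n : ℕ) (x y : Fin n → List (Fin n × Bool)) : ℕ → List (Fin n × Bool) :=
  fun ℓ => if h : ℓ < 2 * n then
    (if ℓ % 2 = 0 then x ⟨ℓ / 2, by omega⟩ else y ⟨ℓ / 2, by omega⟩) else []

/-- Derivable judgments `⊢_{G_n} I(s_1, …, s_n)` of the grammar `G_n`: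
* `empty` is the axiom `I(ε, …, ε)`;
* `binary` is the rule `I(w_1, …, w_n) ⇐ I(x_1, …, x_n), I(y_1, …, y_n)` for
  any factorization of `x_1 y_1 x_2 y_2 ⋯ x_n y_n` into `n` consecutive pieces
  `w_1, …, w_n` (given by cut indices `k`);
* `pair` adds a compatible pair `α, ᾱ` at endpoints of two distinct components
  (`u`/`v` select front or back);
* `wrap` adds `α` and `ᾱ` at the two endpoints of a single component. -/
inductive Der (n : ℕ) : (Fin n → List (Fin n × Bool)) → Prop where
  | empty : Der n (fun _ => [])
  | binary (x y w : Fin n → List (Fin n × Bool)) (k : ℕ → ℕ)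
      (hx : Der n x) (hy : Der n y)
      (h0 : k 0 = 0) (hend : k n = 2 * n) (hmono : ∀ j, j < n → k j ≤ k (j + 1))
      (hw : ∀ j : Fin n, w j =
        ((List.range' (k j) (k ((j : ℕ) + 1) - k j)).map (interleave n x y)).flatten) :
      Der n w
  | pair (x w : Fin n → List (Fin n × Bool)) (α : Fin n × Bool) (a b : Fin n)
      (u v : Bool) (hab : a ≠ b) (hx : Der n x)
      (ha : w a = if u then α :: x a else x a ++ [α])
      (hb : w b = if v then (α.1, !α.2) :: x b else x b ++ [(α.1, !α.2)])
      (hother : ∀ j, j ≠ a → j ≠ b → w j = x j) :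
      Der n w
  | wrap (x w : Fin n → List (Fin n × Bool)) (α : Fin n × Bool) (a : Fin n)
      (hx : Der n x)
      (ha : w a = α :: (x a ++ [(α.1, !α.2)]))
      (hother : ∀ j, j ≠ a → w j = x j) :
      Der n w

/-- Derivability of the judgment `⊢_{G_n} S(w)`, via the initial rule
`S(x_1 ⋯ x_n) ⇐ I(x_1, …, x_n)`. -/
def SDer (n : ℕ) (w : List (Fin n × Bool)) : Prop :=
  ∃ s : Fin n → List (Fin n × Bool), Der n s ∧ w = (List.ofFn s).flatten


private lemma list_sum_range' (f : ℕ → ℕ) (m : ℕ) :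
    ((List.range m).map f).sum = ∑ i ∈ Finset.range m, f i := by
  induction m with
  | zero => simp
  | succ m ih => rw [List.sum_range_succ, Finset.sum_range_succ, ih]

private lemma kmono (k : ℕ → ℕ) (m : ℕ) (hmono : ∀ j, j < m → k j ≤ k (j + 1)) :
    ∀ j, j ≤ m → k 0 ≤ k j := by
  intro j hj
  induction j with
  | zero => exact le_rfl
  | succ j ihj => exact le_trans (ihj (by omega)) (hmono j (by omega))

private lemma telescope (f : ℕ → ℕ) (k : ℕ → ℕ) (m : ℕ)
    (hmono : ∀ j, j < m → k j ≤ k (j + 1)) :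
    ∑ j ∈ Finset.range m, (∑ ℓ ∈ Finset.Ico (k j) (k (j+1)), f ℓ)
      = ∑ ℓ ∈ Finset.Ico (k 0) (k m), f ℓ := by
  induction m with
  | zero => simp
  | succ m ih =>
    rw [Finset.sum_range_succ, ih (fun j hj => hmono j (by omega)),
      Finset.sum_Ico_consecutive]
    · exact kmono k (m+1) hmono m (by omega)
    · exact hmono m (by omega)

private lemma pairsum (f : ℕ → ℕ) (m : ℕ) :
    ∑ ℓ ∈ Finset.range (2 * m), f ℓ
      = ∑ t ∈ Finset.range m, (f (2*t) + f (2*t+1)) := by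
  induction m with
  | zero => simp
  | succ m ih =>
    have h2 : 2 * (m + 1) = (2*m) + 1 + 1 := by ring
    rw [h2, Finset.sum_range_succ, Finset.sum_range_succ, ih, Finset.sum_range_succ]
    ring

-- binary: component j as an Ico sum
private lemma count_binary (n : ℕ) (x y : Fin n → List (Fin n × Bool)) (k : ℕ → ℕ)
    (c : Fin n × Bool) (j : Fin n) :
    (((List.range' (k j) (k ((j : ℕ) + 1) - k j)).map (interleave n x y)).flatten).count c
      = ∑ ℓ ∈ Finset.Ico (k j) (k ((j : ℕ)+1)), ((interleave n x y ℓ).count c) := by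
  rw [List.count_flatten, List.map_map, List.range'_eq_map_range, List.map_map,
    list_sum_range', Finset.sum_Ico_eq_sum_range]
  rfl

private lemma interleave_even (n : ℕ) (x y : Fin n → List (Fin n × Bool)) (j : Fin n) :
    interleave n x y (2 * (j : ℕ)) = x j := by
  have h : 2 * (j : ℕ) < 2 * n := by omega
  simp only [interleave, dif_pos h, Nat.mul_mod_right, if_pos rfl]
  congr 1
  ext
  simp [Nat.mul_div_cancel_left _ (by norm_num : 0 < 2)]

private lemma interleave_odd (n : ℕ) (x y : Fin n → List (Fin n × Bool)) (j : Fin n) :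
    interleave n x y (2 * (j : ℕ) + 1) = y j := by
  have h : 2 * (j : ℕ) + 1 < 2 * n := by omega
  have hm : (2 * (j : ℕ) + 1) % 2 = 1 := by omega
  have hd : (2 * (j : ℕ) + 1) / 2 = (j : ℕ) := by omega
  simp only [interleave, dif_pos h, hm]
  norm_num
  congr 1
  ext
  simp [hd]

private lemma cnt_der (n : ℕ) (s : Fin n → List (Fin n × Bool)) (hs : Der n s)
    (i : Fin n) :
    ∑ j : Fin n, (s j).count (i, true) = ∑ j : Fin n, (s j).count (i, false) := by
  induction hs with
  | empty => simp
  | binary x y w k hx hy h0 hend hmono hw ihx ihy =>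
    have key : ∀ c : Fin n × Bool, ∑ j : Fin n, (w j).count c
        = ∑ j : Fin n, (x j).count c + ∑ j : Fin n, (y j).count c := by
      intro c
      set f : ℕ → ℕ := fun ℓ => (interleave n x y ℓ).count c with hf
      have step1 : ∑ j : Fin n, (w j).count c
          = ∑ t ∈ Finset.range n, (∑ ℓ ∈ Finset.Ico (k t) (k (t+1)), f ℓ) := by
        rw [Finset.sum_range]
        apply Finset.sum_congr rfl
        intro j _
        rw [hw j, count_binary]
      rw [step1, telescope f k n hmono, h0, hend, ← Finset.range_eq_Ico, pairsum,
        Finset.sum_range, ← Finset.sum_add_distrib]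
      apply Finset.sum_congr rfl
      intro j _
      rw [hf]
      simp only
      rw [interleave_even, interleave_odd]
    rw [key, key, ihx, ihy]
  | pair x w α a b u v hab hx ha hb hother ihx =>
    have key : ∀ c : Fin n × Bool, ∑ j : Fin n, (w j).count c
        = ∑ j : Fin n, (x j).count c + [α].count c + [(α.1, !α.2)].count c := by
      intro c
      have hsplit : ∀ j : Fin n, (w j).count c = (x j).count c
          + (if j = a then [α].count c else 0)
          + (if j = b then [(α.1, !α.2)].count c else 0) := by
        intro j
        by_cases hja : j = a
        · subst hja
          have hjb : j ≠ b := hab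
          rw [if_pos rfl, if_neg hjb, ha]
          cases u <;> simp [List.count_append, List.count_cons] <;> ring
        · by_cases hjb : j = b
          · subst hjb
            rw [if_neg hja, if_pos rfl, hb]
            cases v <;> simp [List.count_append, List.count_cons] <;> ring
          · rw [if_neg hja, if_neg hjb, hother j hja hjb]; ring
      calc ∑ j : Fin n, (w j).count c
          = ∑ j : Fin n, ((x j).count c
            + (if j = a then [α].count c else 0)
            + (if j = b then [(α.1, !α.2)].count c else 0)) :=
            Finset.sum_congr rfl (fun j _ => hsplit j)
        _ = ∑ j : Fin n, (x j).count c + [α].count c + [(α.1, !α.2)].count c := by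
            rw [Finset.sum_add_distrib, Finset.sum_add_distrib]
            simp [Finset.sum_ite_eq']
    rw [key, key, ihx]
    have hcc : [α].count (i, true) + [(α.1, !α.2)].count (i, true)
        = [α].count (i, false) + [(α.1, !α.2)].count (i, false) := by
      rcases α with ⟨q, bq⟩
      cases bq <;> by_cases hq : i = q <;> simp [List.count_singleton, hq] <;> omega
    omega
  | wrap x w α a hx ha hother ihx =>
    have key : ∀ c : Fin n × Bool, ∑ j : Fin n, (w j).count c
        = ∑ j : Fin n, (x j).count c + [α].count c + [(α.1, !α.2)].count c := by
      intro c
      have hsplit : ∀ j : Fin n, (w j).count c = (x j).count c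
          + (if j = a then [α].count c + [(α.1, !α.2)].count c else 0) := by
        intro j
        by_cases hja : j = a
        · subst hja
          rw [if_pos rfl, ha]
          simp [List.count_append, List.count_cons] <;> ring
        · rw [if_neg hja, hother j hja]; ring
      calc ∑ j : Fin n, (w j).count c
          = ∑ j : Fin n, ((x j).count c
            + (if j = a then [α].count c + [(α.1, !α.2)].count c else 0)) :=
            Finset.sum_congr rfl (fun j _ => hsplit j)
        _ = _ := by
            rw [Finset.sum_add_distrib]
            simp [Finset.sum_ite_eq']
            ring
    rw [key, key, ihx]
    have hcc : [α].count (i, true) + [(α.1, !α.2)].count (i, true)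
        = [α].count (i, false) + [(α.1, !α.2)].count (i, false) := by
      rcases α with ⟨q, bq⟩
      cases bq <;> by_cases hq : i = q <;> simp [List.count_singleton, hq] <;> omega
    omega

/-- soundness of `G_n`: every derivable judgment
`⊢_{G_n} I(s_1, …, s_n)` satisfies `s_1 ⋯ s_n ∈ O_n`, and consequently every
word `w` with `⊢_{G_n} S(w)` derivable belongs to `O_n`. -/
theorem stmt18 (n : ℕ) :
    (∀ s : Fin n → List (Fin n × Bool), Der n s →
      ∀ i : Fin n, ((List.ofFn s).flatten).count (i, true) =
        ((List.ofFn s).flatten).count (i, false)) ∧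
    (∀ w : List (Fin n × Bool), SDer n w →
      ∀ i : Fin n, w.count (i, true) = w.count (i, false)) := by
  constructor
  · intro s hs i
    have h : ∀ c : Fin n × Bool, ((List.ofFn s).flatten).count c = ∑ j : Fin n, (s j).count c := by
      intro c
      rw [List.count_flatten, List.map_ofFn, List.sum_ofFn]
      rfl
    rw [h, h]
    exact cnt_der n s hs i
  · rintro w ⟨s, hs, rfl⟩ i
    have h : ∀ c : Fin n × Bool, ((List.ofFn s).flatten).count c = ∑ j : Fin n, (s j).count c := by
      intro c
      rw [List.count_flatten, List.map_ofFn, List.sum_ofFn]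
      rfl
    rw [h, h]
    exact cnt_der n s hs i
end
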